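/- arXiv:2307.10158 — 6 statements merged into one kernel-verified Lean document; each statement's English description precedes it below -/
import Mathlib

section
/- Let pen be a real-valued polyhedral gauge on ℝ^p, i.e. pen(b) = max{⟨u_1,b⟩,…,⟨u_k,b⟩} for finitely many vectors u_1,…,u_k ∈ ℝ^p with u_1 = 0. Then for every β ∈ ℝ^p, the linear span of the pattern equivalence class C_β equals the orthogonal complement of the direction space of the affine hull of ∂pen(β), i.e. lin(C_β) = (vec-aff(∂pen(β)))^⊥. -/
open scoped RealInnerProductSpace

noncomputable section

/-- Convert a plain coordinate vector to an element of Euclidean space. -/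
def toEuc {n : ℕ} (v : Fin n → ℝ) : EuclideanSpace ℝ (Fin n) :=
  (WithLp.equiv 2 (Fin n → ℝ)).symm v

/-- The subdifferential of `φ : ℝ^p → ℝ` at `β`:
`∂φ(β) = {s : φ(β) + ⟪s, b − β⟫ ≤ φ(b) for all b}`. -/
def subdiff {p : ℕ} (φ : EuclideanSpace ℝ (Fin p) → ℝ) (β : EuclideanSpace ℝ (Fin p)) :
    Set (EuclideanSpace ℝ (Fin p)) :=
  {s | ∀ b, φ β + ⟪s, b - β⟫ ≤ φ b}

/-- `S_{X,λpen}(y)`: the set of minimizers of `b ↦ (1/2)‖y − Xb‖₂² + λ·pen(b)`. -/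
def Smin {n p : ℕ} (X : Matrix (Fin n) (Fin p) ℝ) (lam : ℝ)
    (pen : EuclideanSpace ℝ (Fin p) → ℝ) (y : EuclideanSpace ℝ (Fin n)) :
    Set (EuclideanSpace ℝ (Fin p)) :=
  {b | ∀ b' : EuclideanSpace ℝ (Fin p), (1/2) * ‖y - toEuc (X.mulVec b)‖^2 + lam * pen b
        ≤ (1/2) * ‖y - toEuc (X.mulVec b')‖^2 + lam * pen b'}

/-- The row space of a matrix `X`: `{Xᵀz : z ∈ ℝ^n}`. -/
def rowSpace {n p : ℕ} (X : Matrix (Fin n) (Fin p) ℝ) : Set (EuclideanSpace ℝ (Fin p)) :=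
  Set.range fun z : EuclideanSpace ℝ (Fin n) => toEuc (X.transpose.mulVec z)

/-- The normal cone of a set `K` at `x`: `{s : ⟪s, b − x⟫ ≤ 0 for all b ∈ K}`. -/
def normalCone' {p : ℕ} (K : Set (EuclideanSpace ℝ (Fin p))) (x : EuclideanSpace ℝ (Fin p)) :
    Set (EuclideanSpace ℝ (Fin p)) :=
  {s | ∀ b ∈ K, ⟪s, b - x⟫ ≤ 0}

/-- The supremum norm `‖x‖_∞` on Euclidean space. -/
def supNorm {p : ℕ} (x : EuclideanSpace ℝ (Fin p)) : ℝ := ⨆ i, abs (x i)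

/-- `F` is an (exposed) face of `P`: `F = {x ∈ P : ⟪a,x⟫ = c}` for some valid inequality
`⟪a,x⟫ ≤ c` of `P`. -/
def IsFace {p : ℕ} (P F : Set (EuclideanSpace ℝ (Fin p))) : Prop :=
  ∃ (a : EuclideanSpace ℝ (Fin p)) (c : ℝ),
    (∀ x ∈ P, ⟪a, x⟫ ≤ c) ∧ F = {x ∈ P | ⟪a, x⟫ = c}

/-!
For a positively homogeneous `φ`, `s ∈ ∂φ(x)` means `⟪s, ·⟫ ≤ φ` with equality at `x`.
Hence every `x ∈ C_β` is orthogonal to all differences of subgradients at `β`, which gives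
`lin(C_β) ⊆ (vec-aff ∂pen(β))ᗮ`. Conversely, if `v ⟂ vec-aff ∂pen(β)` then all subgradients at
`β` take one value `c` on `v`; in particular so do the active `u i`, while the inactive ones stay
inactive near `β`. So `pen (β + t • v) = pen β + t * c` for small `t`, which forces
`∂pen(β + t • v) = ∂pen(β)`, and `v = t⁻¹ • ((β + t • v) - β) ∈ lin(C_β)`.
-/

open Filter Topology

lemma mem_orthogonal_direction_affineSpan_iff {E : Type*} [NormedAddCommGroup E]
    [InnerProductSpace ℝ E] {S : Set E} {x : E} :
    x ∈ (affineSpan ℝ S).directionᗮ ↔ ∀ s ∈ S, ∀ t ∈ S, ⟪s - t, x⟫ = 0 := by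
  rw [direction_affineSpan, vectorSpan_def, ← Submodule.span_singleton_le_iff_mem,
    ← Submodule.isOrtho_iff_le, Submodule.isOrtho_comm, Submodule.isOrtho_span]
  simp only [Set.mem_singleton_iff, forall_eq]
  exact Set.forall_mem_image2

section Homogeneous

variable {p : ℕ} {φ : EuclideanSpace ℝ (Fin p) → ℝ}

lemma mem_subdiff_iff_of_homogeneous (hφ : ∀ t : ℝ, 0 ≤ t → ∀ x, φ (t • x) = t * φ x)
    {x s : EuclideanSpace ℝ (Fin p)} :
    s ∈ subdiff φ x ↔ (∀ b, ⟪s, b⟫ ≤ φ b) ∧ ⟪s, x⟫ = φ x := by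
  have hφ₀ : φ 0 = 0 := by simpa using hφ 0 le_rfl 0
  constructor
  · intro hs
    have h₀ := hs 0
    have h₂ := hs ((2 : ℝ) • x)
    rw [hφ₀, zero_sub, inner_neg_right] at h₀
    rw [hφ 2 zero_le_two, two_smul, add_sub_cancel_right] at h₂
    have hx : ⟪s, x⟫ = φ x := by linarith
    refine ⟨fun b => ?_, hx⟩
    have hb := hs b
    rw [inner_sub_right] at hb
    linarith
  · rintro ⟨hle, hx⟩ b
    rw [inner_sub_right, hx]
    linarith [hle b]

/-- The factor `2` supplies the upper bound `⟪s, v⟫ ≤ c` for `s ∈ ∂φ(β + t • v)`. -/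
lemma subdiff_add_smul_eq_of_homogeneous (hφ : ∀ t : ℝ, 0 ≤ t → ∀ x, φ (t • x) = t * φ x)
    {β v : EuclideanSpace ℝ (Fin p)} {c t : ℝ} (ht : 0 < t)
    (hc : ∀ s ∈ subdiff φ β, ⟪s, v⟫ = c)
    (h₁ : φ (β + t • v) = φ β + t * c) (h₂ : φ (β + (2 * t) • v) = φ β + 2 * t * c) :
    subdiff φ (β + t • v) = subdiff φ β := by
  ext s
  constructor
  · intro hs
    obtain ⟨hle, hx⟩ := (mem_subdiff_iff_of_homogeneous hφ).1 hs
    have hβ := hle β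
    have h₂s := hle (β + (2 * t) • v)
    rw [h₂, inner_add_right, real_inner_smul_right] at h₂s
    rw [h₁, inner_add_right, real_inner_smul_right] at hx
    have hsv : ⟪s, v⟫ ≤ c := le_of_mul_le_mul_left (by linarith) ht
    exact (mem_subdiff_iff_of_homogeneous hφ).2 ⟨hle, le_antisymm hβ (by nlinarith)⟩
  · intro hs
    obtain ⟨hle, hβ⟩ := (mem_subdiff_iff_of_homogeneous hφ).1 hs
    refine (mem_subdiff_iff_of_homogeneous hφ).2 ⟨hle, ?_⟩
    rw [inner_add_right, real_inner_smul_right, hβ, hc s hs, h₁]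

end Homogeneous

section PolyhedralGauge

variable {p : ℕ} {ι : Type*} [Fintype ι] [Nonempty ι] (u : ι → EuclideanSpace ℝ (Fin p))

def polyhedralGauge (x : EuclideanSpace ℝ (Fin p)) : ℝ :=
  Finset.univ.sup' Finset.univ_nonempty fun i => ⟪u i, x⟫

lemma polyhedralGauge_smul (t : ℝ) (ht : 0 ≤ t) (x : EuclideanSpace ℝ (Fin p)) :
    polyhedralGauge u (t • x) = t * polyhedralGauge u x := by
  simp only [polyhedralGauge, Finset.mul₀_sup' ht, real_inner_smul_right]

lemma inner_le_polyhedralGauge (i : ι) (x : EuclideanSpace ℝ (Fin p)) :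
    ⟪u i, x⟫ ≤ polyhedralGauge u x :=
  Finset.le_sup' (fun i => ⟪u i, x⟫) (Finset.mem_univ i)

lemma exists_inner_eq_polyhedralGauge (x : EuclideanSpace ℝ (Fin p)) :
    ∃ i, ⟪u i, x⟫ = polyhedralGauge u x := by
  obtain ⟨i, -, hi⟩ := Finset.exists_mem_eq_sup' Finset.univ_nonempty fun i => ⟪u i, x⟫
  exact ⟨i, hi.symm⟩

lemma mem_subdiff_polyhedralGauge_of_inner_eq {i : ι} {x : EuclideanSpace ℝ (Fin p)}
    (hi : ⟪u i, x⟫ = polyhedralGauge u x) : u i ∈ subdiff (polyhedralGauge u) x :=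
  (mem_subdiff_iff_of_homogeneous (polyhedralGauge_smul u)).2
    ⟨inner_le_polyhedralGauge u i, hi⟩

lemma inner_eq_polyhedralGauge_of_mem_subdiff {s x : EuclideanSpace ℝ (Fin p)}
    (hs : s ∈ subdiff (polyhedralGauge u) x) : ⟪s, x⟫ = polyhedralGauge u x :=
  ((mem_subdiff_iff_of_homogeneous (polyhedralGauge_smul u)).1 hs).2

lemma eventually_polyhedralGauge_add_smul {β v : EuclideanSpace ℝ (Fin p)} {c : ℝ}
    (hc : ∀ s ∈ subdiff (polyhedralGauge u) β, ⟪s, v⟫ = c) :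
    ∀ᶠ t in 𝓝 0, polyhedralGauge u (β + t • v) = polyhedralGauge u β + t * c := by
  have hbound : ∀ i, ∀ᶠ t : ℝ in 𝓝 0, ⟪u i, β + t • v⟫ ≤ polyhedralGauge u β + t * c := by
    intro i
    rcases (inner_le_polyhedralGauge u i β).lt_or_eq with hlt | hi
    · refine (ContinuousAt.eventually_lt (by fun_prop) (by fun_prop) ?_).mono fun _ h => h.le
      simpa using hlt
    · have hv := hc _ (mem_subdiff_polyhedralGauge_of_inner_eq u hi)
      refine .of_forall fun t => ?_
      rw [inner_add_right, real_inner_smul_right, hi, hv]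
  filter_upwards [eventually_all.2 hbound] with t ht
  obtain ⟨i, hi⟩ := exists_inner_eq_polyhedralGauge u β
  refine le_antisymm (Finset.sup'_le _ _ fun j _ => ht j) ?_
  calc polyhedralGauge u β + t * c = ⟪u i, β + t • v⟫ := by
        rw [inner_add_right, real_inner_smul_right, hi,
          hc _ (mem_subdiff_polyhedralGauge_of_inner_eq u hi)]
    _ ≤ polyhedralGauge u (β + t • v) := inner_le_polyhedralGauge u i _

lemma exists_pos_subdiff_polyhedralGauge_add_smul_eq {β v : EuclideanSpace ℝ (Fin p)} {c : ℝ}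
    (hc : ∀ s ∈ subdiff (polyhedralGauge u) β, ⟪s, v⟫ = c) :
    ∃ t : ℝ, 0 < t ∧ subdiff (polyhedralGauge u) (β + t • v) = subdiff (polyhedralGauge u) β := by
  have hlin := eventually_polyhedralGauge_add_smul u hc
  have hdouble : Tendsto (fun t : ℝ => 2 * t) (𝓝 0) (𝓝 0) := by
    simpa using (continuous_const_mul (2 : ℝ)).tendsto 0
  have hlin₂ : ∀ᶠ t : ℝ in 𝓝 0,
      polyhedralGauge u (β + (2 * t) • v) = polyhedralGauge u β + 2 * t * c :=
    hdouble.eventually hlin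
  have hright : ∀ᶠ t : ℝ in 𝓝[>] 0, 0 < t := self_mem_nhdsWithin
  obtain ⟨t, ht, h₁, h₂⟩ := (hright.and ((hlin.and hlin₂).filter_mono nhdsWithin_le_nhds)).exists
  exact ⟨t, ht, subdiff_add_smul_eq_of_homogeneous (polyhedralGauge_smul u) ht hc h₁ h₂⟩

end PolyhedralGauge

theorem span_pattern_class_eq_orthogonal_general {p k : ℕ}
    (u : Fin (k + 1) → EuclideanSpace ℝ (Fin p))
    (pen : EuclideanSpace ℝ (Fin p) → ℝ)
    (hpen : ∀ x, pen x = Finset.univ.sup' Finset.univ_nonempty fun i => ⟪u i, x⟫)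
    (β : EuclideanSpace ℝ (Fin p)) :
    Submodule.span ℝ {x | subdiff pen x = subdiff pen β}
      = ((affineSpan ℝ (subdiff pen β)).direction)ᗮ := by
  obtain rfl : pen = polyhedralGauge u := funext hpen
  apply le_antisymm
  · refine Submodule.span_le.2 fun x (hx : subdiff _ x = _) =>
      mem_orthogonal_direction_affineSpan_iff.2 fun s hs t ht => ?_
    rw [← hx] at hs ht
    rw [inner_sub_left, inner_eq_polyhedralGauge_of_mem_subdiff u hs,
      inner_eq_polyhedralGauge_of_mem_subdiff u ht, sub_self]
  · intro v hv
    obtain ⟨i, hi⟩ := exists_inner_eq_polyhedralGauge u β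
    have hui := mem_subdiff_polyhedralGauge_of_inner_eq u hi
    have hc : ∀ s ∈ subdiff (polyhedralGauge u) β, ⟪s, v⟫ = ⟪u i, v⟫ := fun s hs => by
      rw [← sub_eq_zero, ← inner_sub_left]
      exact mem_orthogonal_direction_affineSpan_iff.1 hv s hs _ hui
    obtain ⟨t, ht, hpattern⟩ := exists_pos_subdiff_polyhedralGauge_add_smul_eq u hc
    have hv_eq : v = t⁻¹ • ((β + t • v) - β) := by
      rw [add_sub_cancel_left, smul_smul, inv_mul_cancel₀ ht.ne', one_smul]
    rw [hv_eq]
    exact Submodule.smul_mem _ _ (Submodule.sub_mem _ (Submodule.subset_span hpattern)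
      (Submodule.subset_span rfl))

/-- For a real-valued polyhedral gauge `pen`, the linear span of the pattern
equivalence class `C_β` equals the orthogonal complement of the direction space of the
affine hull of `∂pen(β)`. -/
theorem span_pattern_class_eq_orthogonal {p k : ℕ}
    (u : Fin (k + 1) → EuclideanSpace ℝ (Fin p)) (hu : u 0 = 0)
    (pen : EuclideanSpace ℝ (Fin p) → ℝ)
    (hpen : ∀ x, pen x = Finset.univ.sup' Finset.univ_nonempty fun i => ⟪u i, x⟫)
    (β : EuclideanSpace ℝ (Fin p)) :
    Submodule.span ℝ {x | subdiff pen x = subdiff pen β}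
      = ((affineSpan ℝ (subdiff pen β)).direction)ᗮ :=
  span_pattern_class_eq_orthogonal_general u pen hpen β
end
end

section
/- Let X ∈ ℝ^{n×p}, β ∈ ℝ^p, and let pen be a real-valued polyhedral gauge on ℝ^p (pen(b) = max{⟨u_1,b⟩,…,⟨u_k,b⟩} with u_1 = 0). Let μ be a probability measure on ℝ^n that is symmetric, i.e. the pushforward of μ under e ↦ −e equals μ, and assume the set E = {e ∈ ℝ^n : ∃λ > 0, ∃β̂ ∈ S_{X,λpen}(Xβ + e) with ∂pen(β̂) = ∂pen(β)} is μ-measurable. If β does not satisfy the noiseless recovery condition, i.e. there do NOT exist λ > 0 and β̂ ∈ S_{X,λpen}(Xβ) with ∂pen(β̂) = ∂pen(β), then μ(E) ≤ 1/2. -/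
open scoped RealInnerProductSpace

noncomputable section

/-! The responses `y` from which some point of the solution path has the pattern `∂pen(β)` form a
convex set. Indeed, the optimality conditions `Xᵀ(yᵢ - Xβᵢ)/λᵢ ∈ ∂pen(βᵢ) = ∂pen(β)` average, with
weights proportional to `aᵢλᵢ`, to the optimality condition for `a₁y₁ + a₂y₂` at `a₁β₁ + a₂β₂` with
tuning parameter `a₁λ₁ + a₂λ₂`; and a convex function whose subdifferentials at two points agree
is affine between them, with the same subdifferential along the segment. So if noiseless recovery
fails at `Xβ`, the events "`Xβ + e` recovers" and "`Xβ - e` recovers" are disjoint, and by the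
symmetry of the noise each has probability at most `1/2`. -/

open MeasureTheory Set Filter Topology

theorem convexOn_finset_sup' {𝕜 E β ι : Type*} [Semiring 𝕜] [PartialOrder 𝕜] [AddCommMonoid E]
    [SMul 𝕜 E] [AddCommMonoid β] [LinearOrder β] [IsOrderedAddMonoid β] [Module 𝕜 β]
    [PosSMulStrictMono 𝕜 β] {s : Set E} {t : Finset ι} (ht : t.Nonempty) {f : ι → E → β}
    (hf : ∀ i ∈ t, ConvexOn 𝕜 s (f i)) :
    ConvexOn 𝕜 s (fun x => t.sup' ht fun i => f i x) := by
  convert Finset.sup'_induction ht f (p := ConvexOn 𝕜 s) (fun _ h₁ _ h₂ => h₁.sup h₂) hf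
  exact (Finset.sup'_apply ht f _).symm

theorem measure_le_half_of_disjoint_neg {G : Type*} [MeasurableSpace G] [InvolutiveNeg G]
    [MeasurableNeg G] (μ : Measure G) [IsProbabilityMeasure μ] [μ.IsNegInvariant] {S : Set G}
    (hS : MeasurableSet S) (hdisj : Disjoint S (-S)) : μ S ≤ 1 / 2 := by
  have h : 2 * μ S ≤ 1 := calc
    2 * μ S = μ S + μ (-S) := by rw [Measure.measure_neg, two_mul]
    _ = μ (S ∪ -S) := (measure_union hdisj hS.neg).symm
    _ ≤ 1 := prob_le_one
  rwa [ENNReal.le_div_iff_mul_le (by norm_num) (by norm_num), mul_comm]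

theorem nonneg_of_forall_mem_Ioc_nonneg_add_mul {a c : ℝ}
    (h : ∀ t ∈ Ioc (0 : ℝ) 1, 0 ≤ a + t * c) : 0 ≤ a := by
  have hlim : Tendsto (fun t : ℝ => a + t * c) (𝓝[>] 0) (𝓝 a) := by
    have : Continuous fun t : ℝ => a + t * c := by fun_prop
    simpa using this.continuousWithinAt.tendsto (x := 0) (s := Ioi 0)
  exact ge_of_tendsto hlim (eventually_of_mem (Ioc_mem_nhdsGT one_pos) h)

theorem norm_sub_map_add_sq {E F : Type*} [NormedAddCommGroup E] [InnerProductSpace ℝ E]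
    [FiniteDimensional ℝ E] [NormedAddCommGroup F] [InnerProductSpace ℝ F] [FiniteDimensional ℝ F]
    (A : E →ₗ[ℝ] F) (y : F) (b d : E) :
    ‖y - A (b + d)‖ ^ 2 = ‖y - A b‖ ^ 2 - 2 * ⟪LinearMap.adjoint A (y - A b), d⟫ + ‖A d‖ ^ 2 := by
  rw [map_add, sub_add_eq_sub_sub, norm_sub_sq_real, LinearMap.adjoint_inner_left]

section Subdifferential

variable {p : ℕ} {φ : EuclideanSpace ℝ (Fin p) → ℝ} {x y s : EuclideanSpace ℝ (Fin p)} {a b : ℝ}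

theorem convex_subdiff (φ : EuclideanSpace ℝ (Fin p) → ℝ) (x : EuclideanSpace ℝ (Fin p)) :
    Convex ℝ (subdiff φ x) := by
  intro s₁ h₁ s₂ h₂ a b ha hb hab c
  rw [inner_add_left, real_inner_smul_left, real_inner_smul_left]
  obtain rfl : a = 1 - b := by linarith
  nlinarith [mul_le_mul_of_nonneg_left (h₁ c) ha, mul_le_mul_of_nonneg_left (h₂ c) hb]

theorem apply_smul_add_smul_eq_of_mem_subdiff (hφ : ConvexOn ℝ univ φ) (hx : s ∈ subdiff φ x)
    (hy : s ∈ subdiff φ y) (ha : 0 ≤ a) (hb : 0 ≤ b) (hab : a + b = 1) :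
    φ (a • x + b • y) = a * φ x + b * φ y := by
  refine le_antisymm (hφ.2 (mem_univ x) (mem_univ y) ha hb hab) ?_
  obtain rfl : a = 1 - b := by linarith
  have h₁ := hx ((1 - b) • x + b • y)
  have h₂ := hy ((1 - b) • x + b • y)
  rw [show (1 - b) • x + b • y - x = b • (y - x) by module, real_inner_smul_right] at h₁
  rw [show (1 - b) • x + b • y - y = (b - 1) • (y - x) by module, real_inner_smul_right] at h₂
  nlinarith [mul_le_mul_of_nonneg_left h₁ ha, mul_le_mul_of_nonneg_left h₂ hb]

theorem subdiff_smul_add_smul_subset (hφ : ConvexOn ℝ univ φ) (hx : s ∈ subdiff φ x)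
    (hy : s ∈ subdiff φ y) (ha : 0 < a) (hb : 0 < b) (hab : a + b = 1) :
    subdiff φ (a • x + b • y) ⊆ subdiff φ x := by
  intro s' hs' c
  have hz := apply_smul_add_smul_eq_of_mem_subdiff hφ hx hy ha.le hb.le hab
  obtain rfl : a = 1 - b := by linarith
  have h₁ := hs' x
  have h₂ := hs' y
  have hc := hs' c
  rw [show x - ((1 - b) • x + b • y) = b • (x - y) by module, real_inner_smul_right] at h₁
  rw [show y - ((1 - b) • x + b • y) = (b - 1) • (x - y) by module, real_inner_smul_right] at h₂
  rw [show c - ((1 - b) • x + b • y) = (c - x) + b • (x - y) by module, inner_add_right,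
    real_inner_smul_right] at hc
  -- Averaging `h₁` and `h₂` with weights `1 - b` and `b` gives equality, so `h₁` is tight.
  have hx' : φ x = φ ((1 - b) • x + b • y) + b * ⟪s', x - y⟫ := by nlinarith
  linarith

theorem inter_subdiff_subset_subdiff_smul_add_smul (hφ : ConvexOn ℝ univ φ)
    (hx : s ∈ subdiff φ x) (hy : s ∈ subdiff φ y) (ha : 0 ≤ a) (hb : 0 ≤ b) (hab : a + b = 1) :
    subdiff φ x ∩ subdiff φ y ⊆ subdiff φ (a • x + b • y) := by
  rintro s' ⟨h₁, h₂⟩ c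
  rw [apply_smul_add_smul_eq_of_mem_subdiff hφ hx hy ha hb hab]
  obtain rfl : a = 1 - b := by linarith
  rw [show c - ((1 - b) • x + b • y) = (1 - b) • (c - x) + b • (c - y) by module,
    inner_add_right, real_inner_smul_right, real_inner_smul_right]
  nlinarith [mul_le_mul_of_nonneg_left (h₁ c) ha, mul_le_mul_of_nonneg_left (h₂ c) hb]

theorem subdiff_smul_add_smul_eq (hφ : ConvexOn ℝ univ φ) (hxy : subdiff φ x = subdiff φ y)
    (hne : (subdiff φ x).Nonempty) (ha : 0 < a) (hb : 0 < b) (hab : a + b = 1) :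
    subdiff φ (a • x + b • y) = subdiff φ x := by
  obtain ⟨s, hsx⟩ := hne
  have hsy : s ∈ subdiff φ y := hxy ▸ hsx
  refine (subdiff_smul_add_smul_subset hφ hsx hsy ha hb hab).antisymm ?_
  simpa [hxy] using inter_subdiff_subset_subdiff_smul_add_smul hφ hsx hsy ha.le hb.le hab

end Subdifferential

section Lasso

open Matrix

variable {n p : ℕ} (X : Matrix (Fin n) (Fin p) ℝ)

def lassoSubgradient (lam : ℝ) (y : EuclideanSpace ℝ (Fin n)) (b : EuclideanSpace ℝ (Fin p)) :
    EuclideanSpace ℝ (Fin p) :=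
  lam⁻¹ • LinearMap.adjoint (toEuclideanLin X) (y - toEuclideanLin X b)

variable {pen : EuclideanSpace ℝ (Fin p) → ℝ} {lam : ℝ}

theorem mem_Smin_iff_forall_add {y : EuclideanSpace ℝ (Fin n)} {b : EuclideanSpace ℝ (Fin p)} :
    b ∈ Smin X lam pen y ↔ ∀ d, ⟪LinearMap.adjoint (toEuclideanLin X) (y - toEuclideanLin X b), d⟫
      ≤ lam * (pen (b + d) - pen b) + ‖toEuclideanLin X d‖ ^ 2 / 2 := by
  change (∀ b', 1 / 2 * ‖y - toEuclideanLin X b‖ ^ 2 + lam * pen b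
    ≤ 1 / 2 * ‖y - toEuclideanLin X b'‖ ^ 2 + lam * pen b') ↔ _
  refine ⟨fun h d => ?_, fun h b' => ?_⟩
  · have := h (b + d)
    rw [norm_sub_map_add_sq] at this
    linarith
  · obtain ⟨d, rfl⟩ : ∃ d, b' = b + d := ⟨b' - b, by abel⟩
    rw [norm_sub_map_add_sq]
    linarith [h d]

theorem mem_Smin_iff (hpen : ConvexOn ℝ univ pen) (hlam : 0 < lam) {y : EuclideanSpace ℝ (Fin n)}
    {b : EuclideanSpace ℝ (Fin p)} :
    b ∈ Smin X lam pen y ↔ lassoSubgradient X lam y b ∈ subdiff pen b := by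
  set g := LinearMap.adjoint (toEuclideanLin X) (y - toEuclideanLin X b)
  have hsub : lassoSubgradient X lam y b ∈ subdiff pen b ↔
      ∀ c, ⟪g, c - b⟫ ≤ lam * (pen c - pen b) := by
    refine forall_congr' fun c => ?_
    rw [lassoSubgradient, real_inner_smul_left, ← le_sub_iff_add_le', inv_mul_le_iff₀ hlam]
  rw [mem_Smin_iff_forall_add, hsub]
  refine ⟨fun h c => ?_, fun h d => ?_⟩
  · -- Test minimality along the segment from `b` to `c` and let the step length tend to `0`.
    refine sub_nonneg.1 (nonneg_of_forall_mem_Ioc_nonneg_add_mul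
      (c := ‖toEuclideanLin X (c - b)‖ ^ 2 / 2) fun t ⟨ht0, ht1⟩ => ?_)
    have hmin := h (t • (c - b))
    have hconv : pen (b + t • (c - b)) ≤ (1 - t) * pen b + t * pen c := by
      simpa [show b + t • (c - b) = (1 - t) • b + t • c by module] using
        hpen.2 (mem_univ b) (mem_univ c) (by linarith) ht0.le (by ring)
    rw [real_inner_smul_right, map_smul, norm_smul, mul_pow, Real.norm_eq_abs, sq_abs] at hmin
    refine nonneg_of_mul_nonneg_right ?_ ht0
    nlinarith
  · have := h (b + d)
    rw [add_sub_cancel_left] at this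
    linarith [sq_nonneg ‖toEuclideanLin X d‖]

theorem lassoSubgradient_smul_add_smul {l₁ l₂ a c : ℝ} (hl₁ : l₁ ≠ 0) (hl₂ : l₂ ≠ 0)
    (hl : a * l₁ + c * l₂ ≠ 0) (y₁ y₂ : EuclideanSpace ℝ (Fin n)) (b₁ b₂ : EuclideanSpace ℝ (Fin p)) :
    lassoSubgradient X (a * l₁ + c * l₂) (a • y₁ + c • y₂) (a • b₁ + c • b₂) =
      (a * l₁ / (a * l₁ + c * l₂)) • lassoSubgradient X l₁ y₁ b₁ +
        (c * l₂ / (a * l₁ + c * l₂)) • lassoSubgradient X l₂ y₂ b₂ := by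
  have h₁ : a * l₁ / (a * l₁ + c * l₂) * l₁⁻¹ = (a * l₁ + c * l₂)⁻¹ * a := by field_simp
  have h₂ : c * l₂ / (a * l₁ + c * l₂) * l₂⁻¹ = (a * l₁ + c * l₂)⁻¹ * c := by field_simp
  simp only [lassoSubgradient, smul_smul, h₁, h₂, map_add, map_sub, map_smul]
  module

end Lasso

def RecoversPattern {n p : ℕ} (X : Matrix (Fin n) (Fin p) ℝ) (pen : EuclideanSpace ℝ (Fin p) → ℝ)
    (β : EuclideanSpace ℝ (Fin p)) (y : EuclideanSpace ℝ (Fin n)) : Prop :=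
  ∃ lam > 0, ∃ βh ∈ Smin X lam pen y, subdiff pen βh = subdiff pen β

theorem convex_setOf_recoversPattern {n p : ℕ} (X : Matrix (Fin n) (Fin p) ℝ)
    {pen : EuclideanSpace ℝ (Fin p) → ℝ} (hpen : ConvexOn ℝ univ pen)
    (β : EuclideanSpace ℝ (Fin p)) : Convex ℝ {y | RecoversPattern X pen β y} := by
  rw [convex_iff_forall_pos]
  rintro y₁ ⟨l₁, hl₁, b₁, hb₁, hs₁⟩ y₂ ⟨l₂, hl₂, b₂, hb₂, hs₂⟩ a c ha hc hac
  have hl : 0 < a * l₁ + c * l₂ := by positivity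
  have hg₁ := (mem_Smin_iff X hpen hl₁).1 hb₁
  have hg₂ := (mem_Smin_iff X hpen hl₂).1 hb₂
  have hsub : subdiff pen (a • b₁ + c • b₂) = subdiff pen β :=
    (subdiff_smul_add_smul_eq hpen (hs₁.trans hs₂.symm) ⟨_, hg₁⟩ ha hc hac).trans hs₁
  refine ⟨_, hl, _, (mem_Smin_iff X hpen hl).2 ?_, hsub⟩
  rw [hsub, lassoSubgradient_smul_add_smul X hl₁.ne' hl₂.ne' hl.ne']
  refine convex_subdiff pen β (hs₁ ▸ hg₁) (hs₂ ▸ hg₂) (by positivity) (by positivity) ?_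
  field_simp

open MeasureTheory in
theorem noiseless_recovery_necessary_general {n p k : ℕ}
    (X : Matrix (Fin n) (Fin p) ℝ)
    (u : Fin (k + 1) → EuclideanSpace ℝ (Fin p))
    (pen : EuclideanSpace ℝ (Fin p) → ℝ)
    (hpen : ∀ x, pen x = Finset.univ.sup' Finset.univ_nonempty fun i => ⟪u i, x⟫)
    (β : EuclideanSpace ℝ (Fin p))
    (μ : Measure (EuclideanSpace ℝ (Fin n))) [IsProbabilityMeasure μ]
    (hsymm : μ.map (fun e => -e) = μ)
    (hmeas : MeasurableSet {e : EuclideanSpace ℝ (Fin n) | ∃ lam > 0,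
        ∃ βh ∈ Smin X lam pen (toEuc (X.mulVec β) + e), subdiff pen βh = subdiff pen β})
    (hnrc : ¬ ∃ lam > 0, ∃ βh ∈ Smin X lam pen (toEuc (X.mulVec β)),
        subdiff pen βh = subdiff pen β) :
    μ {e : EuclideanSpace ℝ (Fin n) | ∃ lam > 0,
        ∃ βh ∈ Smin X lam pen (toEuc (X.mulVec β) + e), subdiff pen βh = subdiff pen β}
      ≤ 1 / 2 := by
  have hconv : ConvexOn ℝ univ pen := by
    rw [funext hpen]
    exact convexOn_finset_sup' _ fun i _ => (innerₛₗ ℝ (u i)).convexOn convex_univ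
  have : μ.IsNegInvariant := ⟨hsymm⟩
  refine measure_le_half_of_disjoint_neg μ hmeas (Set.disjoint_left.2 fun e he hne => ?_)
  refine hnrc ?_
  rw [show toEuc (X.mulVec β) = (1 / 2 : ℝ) • (toEuc (X.mulVec β) + e)
    + (1 / 2 : ℝ) • (toEuc (X.mulVec β) + -e) by module]
  exact convex_setOf_recoversPattern X hconv β he hne (by norm_num) (by norm_num) (by norm_num)

open MeasureTheory in
/-- If the noiseless recovery condition fails for `β`, then for any symmetric
probability distribution of the noise, the probability that some point on the solution path
has the same pattern as `β` is at most `1/2`. -/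
theorem noiseless_recovery_necessary {n p k : ℕ}
    (X : Matrix (Fin n) (Fin p) ℝ)
    (u : Fin (k + 1) → EuclideanSpace ℝ (Fin p)) (hu : u 0 = 0)
    (pen : EuclideanSpace ℝ (Fin p) → ℝ)
    (hpen : ∀ x, pen x = Finset.univ.sup' Finset.univ_nonempty fun i => ⟪u i, x⟫)
    (β : EuclideanSpace ℝ (Fin p))
    (μ : Measure (EuclideanSpace ℝ (Fin n))) [IsProbabilityMeasure μ]
    (hsymm : μ.map (fun e => -e) = μ)
    (hmeas : MeasurableSet {e : EuclideanSpace ℝ (Fin n) | ∃ lam > 0,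
        ∃ βh ∈ Smin X lam pen (toEuc (X.mulVec β) + e), subdiff pen βh = subdiff pen β})
    (hnrc : ¬ ∃ lam > 0, ∃ βh ∈ Smin X lam pen (toEuc (X.mulVec β)),
        subdiff pen βh = subdiff pen β) :
    μ {e : EuclideanSpace ℝ (Fin n) | ∃ lam > 0,
        ∃ βh ∈ Smin X lam pen (toEuc (X.mulVec β) + e), subdiff pen βh = subdiff pen β}
      ≤ 1 / 2 :=
  noiseless_recovery_necessary_general X u pen hpen β μ hsymm hmeas hnrc
end
end

section
/- Let X ∈ ℝ^{n×p}, λ > 0, β ∈ ℝ^p, ε ∈ ℝ^n, and let pen be a real-valued polyhedral gauge on ℝ^p (pen(b) = max{⟨u_1,b⟩,…,⟨u_k,b⟩} with u_1 = 0). Assume uniform uniqueness: for every y ∈ ℝ^n the set S_{X,λpen}(y) is a singleton {β̂(y)}. Assume that pen(b) ≥ pen(β) for every b ∈ ℝ^p with Xb = Xβ. For r ∈ ℕ set y^(r) = X(rβ) + ε. Then there exist r₀ ∈ ℕ and τ₀ > 0 such that for all r ≥ r₀, with τ = r·τ₀/2: (i) every b ∈ ℝ^p with ‖b − β̂(y^(r))‖_∞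 ≤ τ satisfies ∂pen(b) ⊆ ∂pen(β), and (ii) there exists b₀ ∈ ℝ^p with ‖b₀ − β̂(y^(r))‖_∞ ≤ τ and ∂pen(b₀) = ∂pen(β). -/
/-!
Write `pen = max_i ⟪u i, ·⟫`. Near any point the set of active indices can only shrink, and a
subgradient at `b` is one at `β` as soon as every index active at `b` is active at `β`. Active
sets are invariant under positive scaling, so it suffices that `β̂(y⁽ʳ⁾) - rβ` stays bounded.

Minimality of `pen` on the fiber `β + ker X` yields a multiplier `Xᵀz ∈ ∂pen(β)`, which makes `β`
the lasso solution for the response `Xβ + λz`; uniform uniqueness then makes `β` the unique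
minimizer of `pen` on its fiber, and polyhedrality upgrades this to linear growth
`pen (β + w) ≥ pen β + γ‖w‖` on `ker X`. Comparing the lasso objective at `β̂(y⁽ʳ⁾)` and at `rβ`
bounds both the kernel and the row-space component of `β̂(y⁽ʳ⁾) - rβ` independently of `r`.
-/

open scoped RealInnerProductSpace

noncomputable section

open Filter Set Topology
open scoped NNReal

section PolyhedralGauge

variable {E : Type*} [NormedAddCommGroup E] [InnerProductSpace ℝ E]
  {ι : Type*} [Fintype ι] [Nonempty ι] (u : ι → E)

def polyGauge (x : E) : ℝ := Finset.univ.sup' Finset.univ_nonempty fun i => ⟪u i, x⟫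

theorem inner_le_polyGauge (i : ι) (x : E) : ⟪u i, x⟫ ≤ polyGauge u x :=
  Finset.le_sup' (fun i => ⟪u i, x⟫) (Finset.mem_univ i)

theorem exists_inner_eq_polyGauge (x : E) : ∃ i, ⟪u i, x⟫ = polyGauge u x := by
  obtain ⟨i, -, hi⟩ := Finset.exists_mem_eq_sup' Finset.univ_nonempty fun i => ⟪u i, x⟫
  exact ⟨i, hi.symm⟩

theorem continuous_polyGauge : Continuous (polyGauge u) :=
  Continuous.finset_sup'_apply _ fun _ _ => continuous_const.inner continuous_id

theorem polyGauge_smul {c : ℝ} (hc : 0 ≤ c) (x : E) :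
    polyGauge u (c • x) = c * polyGauge u x := by
  simp only [polyGauge, inner_smul_right, Finset.mul₀_sup' hc]

theorem exists_lipschitzWith_polyGauge : ∃ M, LipschitzWith M (polyGauge u) := by
  refine ⟨Finset.univ.sup' Finset.univ_nonempty fun i => ‖u i‖₊,
    LipschitzWith.of_le_add_mul _ fun x y => Finset.sup'_le _ _ fun i _ => ?_⟩
  have hM : ‖u i‖ ≤ Finset.univ.sup' Finset.univ_nonempty fun i => ‖u i‖₊ :=
    Finset.le_sup' (fun i => ‖u i‖₊) (Finset.mem_univ i)
  calc ⟪u i, x⟫ = ⟪u i, y⟫ + ⟪u i, x - y⟫ := by rw [← inner_add_right, add_sub_cancel]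
    _ ≤ polyGauge u y + ‖u i‖ * dist x y := by
      rw [dist_eq_norm]
      exact add_le_add (inner_le_polyGauge u i y) (real_inner_le_norm _ _)
    _ ≤ _ := by gcongr

def activeSet (x : E) : Finset ι := {i | ⟪u i, x⟫ = polyGauge u x}

variable {u} in
theorem mem_activeSet {x : E} {i : ι} : i ∈ activeSet u x ↔ ⟪u i, x⟫ = polyGauge u x := by
  simp [activeSet]

theorem activeSet_nonempty (x : E) : (activeSet u x).Nonempty :=
  (exists_inner_eq_polyGauge u x).imp fun _ => mem_activeSet.2

theorem activeSet_smul {c : ℝ} (hc : 0 < c) (x : E) : activeSet u (c • x) = activeSet u x := by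
  ext i
  simp only [mem_activeSet, inner_smul_right, polyGauge_smul u hc.le, mul_right_inj' hc.ne']

theorem eventually_activeSet_subset (x : E) : ∀ᶠ y in 𝓝 x, activeSet u y ⊆ activeSet u x := by
  have h : ∀ i, ∀ᶠ y in 𝓝 x, i ∈ activeSet u y → i ∈ activeSet u x := by
    intro i
    by_cases hi : i ∈ activeSet u x
    · exact Eventually.of_forall fun _ _ => hi
    have hlt : ⟪u i, x⟫ < polyGauge u x :=
      (inner_le_polyGauge u i x).lt_of_ne fun h => hi (mem_activeSet.2 h)
    filter_upwards [(continuous_const.inner continuous_id).continuousAt.eventually_lt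
      (continuous_polyGauge u).continuousAt hlt] with y hy hiy
    exact absurd (mem_activeSet.1 hiy) hy.ne
  filter_upwards [eventually_all.2 h] with y hy i hi using hy i hi

/-- The one-sided directional derivative of `polyGauge u` at `x` in the direction `w`. -/
def polyGaugeDeriv (x w : E) : ℝ :=
  (activeSet u x).sup' (activeSet_nonempty u x) fun i => ⟪u i, w⟫

theorem inner_le_polyGaugeDeriv {x : E} {i : ι} (hi : i ∈ activeSet u x) (w : E) :
    ⟪u i, w⟫ ≤ polyGaugeDeriv u x w :=
  Finset.le_sup' (fun i => ⟪u i, w⟫) hi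

theorem exists_mem_activeSet_inner_eq_polyGaugeDeriv (x w : E) :
    ∃ i ∈ activeSet u x, ⟪u i, w⟫ = polyGaugeDeriv u x w := by
  obtain ⟨i, hi, heq⟩ := Finset.exists_mem_eq_sup' (activeSet_nonempty u x) fun i => ⟪u i, w⟫
  exact ⟨i, hi, heq.symm⟩

theorem continuous_polyGaugeDeriv (x : E) : Continuous (polyGaugeDeriv u x) :=
  Continuous.finset_sup'_apply _ fun _ _ => continuous_const.inner continuous_id

theorem polyGaugeDeriv_smul (x : E) {c : ℝ} (hc : 0 ≤ c) (w : E) :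
    polyGaugeDeriv u x (c • w) = c * polyGaugeDeriv u x w := by
  simp only [polyGaugeDeriv, inner_smul_right, Finset.mul₀_sup' hc]

theorem polyGauge_add_polyGaugeDeriv_le (x w : E) :
    polyGauge u x + polyGaugeDeriv u x w ≤ polyGauge u (x + w) := by
  obtain ⟨i, hi, heq⟩ := exists_mem_activeSet_inner_eq_polyGaugeDeriv u x w
  rw [← heq, ← mem_activeSet.1 hi, ← inner_add_right]
  exact inner_le_polyGauge u i (x + w)

theorem eventually_polyGauge_add_eq (x : E) :
    ∀ᶠ v in 𝓝 0, polyGauge u (x + v) = polyGauge u x + polyGaugeDeriv u x v := by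
  have hx : Tendsto (x + ·) (𝓝 0) (𝓝 x) := by
    simpa using (continuous_const_add x).tendsto 0
  filter_upwards [hx.eventually (eventually_activeSet_subset u x)] with v hv
  refine le_antisymm ?_ (polyGauge_add_polyGaugeDeriv_le u x v)
  obtain ⟨i, hi⟩ := exists_inner_eq_polyGauge u (x + v)
  have hix : i ∈ activeSet u x := hv (mem_activeSet.2 hi)
  rw [← hi, inner_add_right, mem_activeSet.1 hix]
  exact add_le_add_right (inner_le_polyGaugeDeriv u hix v) _

theorem exists_pos_polyGauge_add_smul_eq (x w : E) :
    ∃ t > 0, polyGauge u (x + t • w) = polyGauge u x + t * polyGaugeDeriv u x w := by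
  have hw : Tendsto (· • w) (𝓝[>] (0 : ℝ)) (𝓝 0) := by
    simpa using ((tendsto_id (x := 𝓝 (0 : ℝ))).smul_const w).mono_left nhdsWithin_le_nhds
  obtain ⟨t, heq, ht⟩ :=
    ((hw.eventually (eventually_polyGauge_add_eq u x)).and self_mem_nhdsWithin).exists
  exact ⟨t, ht, by rw [heq, polyGaugeDeriv_smul u x (le_of_lt ht)]⟩

theorem polyGaugeDeriv_nonneg_of_le {K : Submodule ℝ E} {β : E}
    (hmin : ∀ w ∈ K, polyGauge u β ≤ polyGauge u (β + w)) {w : E} (hw : w ∈ K) :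
    0 ≤ polyGaugeDeriv u β w := by
  obtain ⟨t, ht, heq⟩ := exists_pos_polyGauge_add_smul_eq u β w
  have := hmin _ (K.smul_mem t hw)
  rw [heq, le_add_iff_nonneg_right] at this
  exact (mul_nonneg_iff_of_pos_left ht).1 this

theorem polyGauge_add_inner_le_of_mem_convexHull {β s : E}
    (hs : s ∈ convexHull ℝ (u '' activeSet u β)) (b : E) :
    polyGauge u β + ⟪s, b - β⟫ ≤ polyGauge u b := by
  have hconv : Convex ℝ {s : E | ⟪b - β, s⟫ ≤ polyGauge u b - polyGauge u β} :=
    convex_halfSpace_le (innerₛₗ ℝ (b - β)).isLinear _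
  have hactive : u '' activeSet u β ⊆ {s : E | ⟪b - β, s⟫ ≤ polyGauge u b - polyGauge u β} := by
    rintro _ ⟨i, hi, rfl⟩
    have := inner_le_polyGauge u i b
    show ⟪b - β, u i⟫ ≤ _
    rw [real_inner_comm, inner_sub_right, mem_activeSet.1 hi]
    linarith
  have h : ⟪b - β, s⟫ ≤ polyGauge u b - polyGauge u β := convexHull_min hactive hconv hs
  rw [real_inner_comm] at h
  linarith

theorem polyGauge_smul_add_ge {K : Submodule ℝ E} {β : E} {γ : ℝ}
    (hgrowth : ∀ w ∈ K, polyGauge u β + γ * ‖w‖ ≤ polyGauge u (β + w))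
    {r : ℝ} (hr : 0 < r) {w : E} (hw : w ∈ K) :
    r * polyGauge u β + γ * ‖w‖ ≤ polyGauge u (r • β + w) := by
  have h := hgrowth _ (K.smul_mem r⁻¹ hw)
  rw [norm_smul, Real.norm_of_nonneg (inv_nonneg.2 hr.le)] at h
  rw [show r • β + w = r • (β + r⁻¹ • w) by rw [smul_add, smul_inv_smul₀ hr.ne'],
    polyGauge_smul u hr.le]
  calc r * polyGauge u β + γ * ‖w‖ = r * (polyGauge u β + γ * (r⁻¹ * ‖w‖)) := by
        field_simp
    _ ≤ _ := mul_le_mul_of_nonneg_left h hr.le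

end PolyhedralGauge

section Subdifferential

variable {p : ℕ} {ι : Type*} [Fintype ι] [Nonempty ι] (u : ι → EuclideanSpace ℝ (Fin p))

/-- Moving from `b` away from `β`, the gauge grows at rate `pen b - pen β` because the indices
active at `b` are active at `β`; a subgradient at `b` can grow no faster, and that is exactly the
subgradient inequality at `β`. -/
theorem subdiff_polyGauge_subset_of_activeSet_subset {b β : EuclideanSpace ℝ (Fin p)}
    (h : activeSet u b ⊆ activeSet u β) : subdiff (polyGauge u) b ⊆ subdiff (polyGauge u) β := by
  intro s hs y
  have hderiv : polyGaugeDeriv u b (b - β) = polyGauge u b - polyGauge u β := by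
    obtain ⟨i, hi, heq⟩ := exists_mem_activeSet_inner_eq_polyGaugeDeriv u b (b - β)
    rw [← heq, inner_sub_right, mem_activeSet.1 hi, mem_activeSet.1 (h hi)]
  obtain ⟨t, ht, hteq⟩ := exists_pos_polyGauge_add_smul_eq u b (b - β)
  have hsb : ⟪s, b - β⟫ ≤ polyGauge u b - polyGauge u β := by
    have := hs (b + t • (b - β))
    rw [hteq, hderiv, add_sub_cancel_left, inner_smul_right] at this
    exact le_of_mul_le_mul_left (by linarith) ht
  have hy := hs y
  rw [← sub_add_sub_cancel y b β, inner_add_right]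
  linarith

theorem subdiff_polyGauge_smul {c : ℝ} (hc : 0 < c) (x : EuclideanSpace ℝ (Fin p)) :
    subdiff (polyGauge u) (c • x) = subdiff (polyGauge u) x :=
  (subdiff_polyGauge_subset_of_activeSet_subset u (activeSet_smul u hc x).le).antisymm
    (subdiff_polyGauge_subset_of_activeSet_subset u (activeSet_smul u hc x).ge)

theorem exists_subdiff_polyGauge_subset (β : EuclideanSpace ℝ (Fin p)) :
    ∃ τ > 0, ∀ b, ‖b - β‖ ≤ τ → subdiff (polyGauge u) b ⊆ subdiff (polyGauge u) β := by
  obtain ⟨τ, hτ, h⟩ := Metric.nhds_basis_closedBall.eventually_iff.1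
    (eventually_activeSet_subset u β)
  refine ⟨τ, hτ, fun b hb => subdiff_polyGauge_subset_of_activeSet_subset u (h ?_)⟩
  rwa [Metric.mem_closedBall, dist_eq_norm]

end Subdifferential

section SupNorm

variable {p : ℕ}

theorem supNorm_nonneg (x : EuclideanSpace ℝ (Fin p)) : 0 ≤ supNorm x :=
  Real.iSup_nonneg fun _ => abs_nonneg _

theorem supNorm_le_norm (x : EuclideanSpace ℝ (Fin p)) : supNorm x ≤ ‖x‖ :=
  Real.iSup_le (fun i => PiLp.norm_apply_le x i) (norm_nonneg x)

theorem norm_le_sqrt_mul_supNorm (x : EuclideanSpace ℝ (Fin p)) : ‖x‖ ≤ √p * supNorm x := by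
  have hx (i) : ‖x i‖ ≤ supNorm x := le_ciSup (f := fun i => |x i|) (Finite.bddAbove_range _) i
  rw [EuclideanSpace.norm_eq, ← Real.sqrt_sq (supNorm_nonneg x), ← Real.sqrt_mul p.cast_nonneg]
  gcongr
  calc ∑ i, ‖x i‖ ^ 2 ≤ ∑ _i : Fin p, supNorm x ^ 2 :=
        Finset.sum_le_sum fun i _ => pow_le_pow_left₀ (norm_nonneg _) (hx i) 2
    _ = p * supNorm x ^ 2 := by simp

theorem norm_inv_smul_sub_le_of_supNorm_sub_le {b b' β : EuclideanSpace ℝ (Fin p)} {r a : ℝ}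
    (hr : 0 < r) (hb : supNorm (b - b') ≤ r * a) (hb' : ‖b' - r • β‖ ≤ r * a) :
    ‖r⁻¹ • b - β‖ ≤ (√p + 1) * a := by
  have h : ‖b - r • β‖ ≤ r * ((√p + 1) * a) :=
    calc ‖b - r • β‖ ≤ ‖b - b'‖ + ‖b' - r • β‖ := norm_sub_le_norm_sub_add_norm_sub _ _ _
      _ ≤ √p * (r * a) + r * a := by
        gcongr
        exact (norm_le_sqrt_mul_supNorm _).trans (by gcongr)
      _ = r * ((√p + 1) * a) := by ring
  rwa [show r⁻¹ • b - β = r⁻¹ • (b - r • β) by rw [smul_sub, inv_smul_smul₀ hr.ne'], norm_smul,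
    Real.norm_of_nonneg (inv_nonneg.2 hr.le), inv_mul_le_iff₀ hr]

end SupNorm

theorem exists_pos_mul_norm_le_of_pos {V : Type*} [NormedAddCommGroup V] [NormedSpace ℝ V]
    [FiniteDimensional ℝ V] {f : V → ℝ} (hf : Continuous f)
    (hsmul : ∀ c : ℝ, 0 ≤ c → ∀ x, f (c • x) = c * f x) (hpos : ∀ x, x ≠ 0 → 0 < f x) :
    ∃ γ > 0, ∀ x, γ * ‖x‖ ≤ f x := by
  obtain ⟨γ, hγ, hγS⟩ : ∃ γ > 0, ∀ y ∈ Metric.sphere (0 : V) 1, γ ≤ f y := by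
    rcases (Metric.sphere (0 : V) 1).eq_empty_or_nonempty with h | h
    · exact ⟨1, one_pos, by simp [h]⟩
    obtain ⟨y, hy, hmin⟩ := (isCompact_sphere 0 1).exists_isMinOn h hf.continuousOn
    exact ⟨f y, hpos y (ne_zero_of_mem_unit_sphere ⟨y, hy⟩), hmin⟩
  refine ⟨γ, hγ, fun x => ?_⟩
  rcases eq_or_ne x 0 with rfl | hx
  · simpa using (hsmul 0 le_rfl 0).ge
  have hx' : 0 < ‖x‖ := norm_pos_iff.2 hx
  have := hγS (‖x‖⁻¹ • x) (by simp [norm_smul, hx'.ne'])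
  rw [hsmul _ (inv_nonneg.2 hx'.le), inv_mul_eq_div, le_div_iff₀ hx'] at this
  linarith

section Lasso

variable {E F : Type*} [NormedAddCommGroup E] [InnerProductSpace ℝ E]
  [NormedAddCommGroup F] [InnerProductSpace ℝ F]

def lassoObjective (T : E →L[ℝ] F) (lam : ℝ) (pen : E → ℝ) (y : F) (b : E) : ℝ :=
  (1/2) * ‖y - T b‖^2 + lam * pen b

theorem lassoObjective_basic_inequality {T : E →L[ℝ] F} {lam : ℝ} {pen : E → ℝ} {b b₀ : E}
    {ε : F} (hb : IsMinOn (lassoObjective T lam pen (T b₀ + ε)) univ b) :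
    ‖T (b - b₀)‖ ^ 2 / 2 + lam * pen b ≤ ⟪ε, T (b - b₀)⟫ + lam * pen b₀ := by
  have h : lassoObjective T lam pen (T b₀ + ε) b ≤ lassoObjective T lam pen (T b₀ + ε) b₀ :=
    hb (mem_univ b₀)
  simp only [lassoObjective, add_sub_cancel_left] at h
  rw [show T b₀ + ε - T b = ε - T (b - b₀) by rw [map_sub]; abel, norm_sub_sq_real] at h
  linarith

theorem isMinOn_lassoObjective_of_adjoint [CompleteSpace E] [CompleteSpace F] (T : E →L[ℝ] F)
    {lam : ℝ} (hlam : 0 ≤ lam) {pen : E → ℝ} {β : E} {z : F}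
    (hz : ∀ b, pen β + ⟪T.adjoint z, b - β⟫ ≤ pen b) :
    IsMinOn (lassoObjective T lam pen (T β + lam • z)) univ β := by
  intro b _
  have hb := mul_le_mul_of_nonneg_left (hz b) hlam
  show lassoObjective T lam pen _ β ≤ lassoObjective T lam pen _ b
  simp only [lassoObjective, add_sub_cancel_left]
  rw [show T β + lam • z - T b = lam • z - T (b - β) by rw [map_sub]; abel, norm_sub_sq_real,
    real_inner_smul_left, ← ContinuousLinearMap.adjoint_inner_left]
  nlinarith [sq_nonneg ‖T (b - β)‖]

theorem exists_norm_le_mul_norm_apply [FiniteDimensional ℝ E] (T : E →L[ℝ] F) :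
    ∃ C : ℝ≥0, ∀ ρ ∈ (T.ker)ᗮ, ‖ρ‖ ≤ C * ‖T ρ‖ := by
  set K := T.ker
  have hker : LinearMap.ker ((T : E →ₗ[ℝ] F) ∘ₗ Kᗮ.subtype) = ⊥ := by
    refine (Submodule.eq_bot_iff _).2 fun ρ hρ => Subtype.ext ?_
    exact (Submodule.mem_bot ℝ).1 (K.inf_orthogonal_eq_bot ▸ ⟨hρ, ρ.2⟩)
  obtain ⟨C, -, hC⟩ := LinearMap.exists_antilipschitzWith _ hker
  exact ⟨C, fun ρ hρ => by simpa using hC.le_mul_norm_sub ⟨ρ, hρ⟩ 0⟩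

end Lasso

section PolyhedralLasso

variable {E F : Type*} [NormedAddCommGroup E] [InnerProductSpace ℝ E] [FiniteDimensional ℝ E]
  [NormedAddCommGroup F] [InnerProductSpace ℝ F] [CompleteSpace F]
  {ι : Type*} [Fintype ι] [Nonempty ι] (u : ι → E)

theorem exists_mem_orthogonal_polyGauge_add_inner_le (K : Submodule ℝ E) {β : E}
    (hmin : ∀ w ∈ K, polyGauge u β ≤ polyGauge u (β + w)) :
    ∃ s ∈ Kᗮ, ∀ b, polyGauge u β + ⟪s, b - β⟫ ≤ polyGauge u b := by
  set P := K.starProjection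
  set C := convexHull ℝ (u '' activeSet u β)
  suffices h0 : (0 : E) ∈ P '' C by
    obtain ⟨s, hsC, hPs⟩ := h0
    refine ⟨s, ?_, polyGauge_add_inner_le_of_mem_convexHull u hsC⟩
    rwa [K.starProjection_apply, ZeroMemClass.coe_eq_zero,
      Submodule.orthogonalProjectionOnto_eq_zero_iff] at hPs
  by_contra h0
  have hC : IsCompact (P '' C) :=
    (((activeSet u β).finite_toSet.image u).isCompact_convexHull ℝ).image P.continuous
  obtain ⟨f, c, hf0, hfC⟩ := geometric_hahn_banach_point_closed
    ((convex_convexHull ℝ _).linear_image P.toLinearMap) hC.isClosed h0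
  -- `-P g` is a direction in `K` along which every active index strictly decreases
  set g := (InnerProductSpace.toDual ℝ E).symm f
  obtain ⟨i, hi, heq⟩ := exists_mem_activeSet_inner_eq_polyGaugeDeriv u β (-P g)
  have hnonneg := polyGaugeDeriv_nonneg_of_le u hmin (K.neg_mem (K.starProjection_apply_mem g))
  have hfi : c < f (P (u i)) := hfC _ ⟨u i, subset_convexHull ℝ _ ⟨i, hi, rfl⟩, rfl⟩
  have hgi : ⟪u i, P g⟫ = f (P (u i)) := by
    rw [← K.inner_starProjection_left_eq_right, real_inner_comm,
      InnerProductSpace.toDual_symm_apply]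
  rw [map_zero] at hf0
  rw [← heq, inner_neg_right] at hnonneg
  linarith

variable {u} (T : E →L[ℝ] F) {lam : ℝ} {β : E}
  (hmin : ∀ w ∈ T.ker, polyGauge u β ≤ polyGauge u (β + w))
  (huniq : ∀ y, {b | IsMinOn (lassoObjective T lam (polyGauge u) y) univ b}.Subsingleton)
include hmin huniq

/-- `β` is a lasso solution for a suitable response, so uniqueness of lasso solutions makes `β`
the only minimizer of the gauge on `β + ker T`. -/
theorem eq_zero_of_polyGauge_add_eq (hlam : 0 ≤ lam) {w : E} (hw : w ∈ T.ker)
    (heq : polyGauge u (β + w) = polyGauge u β) : w = 0 := by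
  obtain ⟨s, hsK, hs⟩ := exists_mem_orthogonal_polyGauge_add_inner_le u T.ker hmin
  rw [T.orthogonal_ker,
    (Submodule.closed_of_finiteDimensional _).submodule_topologicalClosure_eq] at hsK
  obtain ⟨z, rfl⟩ := LinearMap.mem_range.1 hsK
  have hβ := isMinOn_lassoObjective_of_adjoint T hlam hs
  have hβw : IsMinOn (lassoObjective T lam (polyGauge u) (T β + lam • z)) univ (β + w) := by
    intro b hb
    have hTw : T w = 0 := hw
    simpa [lassoObjective, hTw, heq] using hβ hb
  simpa using huniq _ hβw hβ

theorem exists_pos_polyGauge_add_ge (hlam : 0 ≤ lam) :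
    ∃ γ > 0, ∀ w ∈ T.ker, polyGauge u β + γ * ‖w‖ ≤ polyGauge u (β + w) := by
  have hpos : ∀ w : T.ker, w ≠ 0 → 0 < polyGaugeDeriv u β w := by
    rintro ⟨w, hw⟩ hw0
    refine (polyGaugeDeriv_nonneg_of_le u hmin hw).lt_of_ne' fun hd => hw0 ?_
    obtain ⟨t, ht, hteq⟩ := exists_pos_polyGauge_add_smul_eq u β w
    have := eq_zero_of_polyGauge_add_eq T hmin huniq hlam (T.ker.smul_mem t hw)
      (by rw [hteq, hd, mul_zero, add_zero])
    exact Subtype.ext ((smul_eq_zero.1 this).resolve_left ht.ne')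
  obtain ⟨γ, hγ, hγle⟩ := exists_pos_mul_norm_le_of_pos (f := fun w : T.ker => polyGaugeDeriv u β w)
    ((continuous_polyGaugeDeriv u β).comp continuous_subtype_val)
    (fun c hc w => polyGaugeDeriv_smul u β hc w) hpos
  exact ⟨γ, hγ, fun w hw =>
    (add_le_add_right (hγle ⟨w, hw⟩) _).trans (polyGauge_add_polyGaugeDeriv_le u β w)⟩

theorem exists_norm_sub_smul_le (hlam : 0 < lam) (ε : F) :
    ∃ R, ∀ r : ℝ, 0 < r → ∀ b,
      IsMinOn (lassoObjective T lam (polyGauge u) (T (r • β) + ε)) univ b → ‖b - r • β‖ ≤ R := by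
  obtain ⟨γ, hγ, hgrowth⟩ := exists_pos_polyGauge_add_ge T hmin huniq hlam.le
  obtain ⟨M, hM⟩ := exists_lipschitzWith_polyGauge u
  obtain ⟨C, hC⟩ := exists_norm_le_mul_norm_apply T
  set κ := ‖ε‖ + lam * M * C
  refine ⟨κ ^ 2 / (2 * (lam * γ)) + C * (2 * κ), fun r hr b hb => ?_⟩
  obtain ⟨w, hw, ρ, hρ, hdecomp⟩ := T.ker.exists_add_mem_mem_orthogonal (b - r • β)
  have hbasic := lassoObjective_basic_inequality hb
  rw [hdecomp, map_add, show T w = 0 from hw, zero_add, polyGauge_smul u hr.le] at hbasic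
  have hpen : r * polyGauge u β + γ * ‖w‖ - M * ‖ρ‖ ≤ polyGauge u b := by
    have hlip := hM.le_add_mul (r • β + w) b
    rw [dist_eq_norm, show r • β + w - b = -ρ by
      rw [← neg_sub, sub_add_eq_sub_sub, hdecomp, add_sub_cancel_left],
      norm_neg] at hlip
    linarith [polyGauge_smul_add_ge u hgrowth hr hw]
  have hρ' := hC ρ hρ
  have hCS := real_inner_le_norm ε (T ρ)
  have hκ : 0 ≤ κ := by positivity
  have key : ‖T ρ‖ ^ 2 / 2 + lam * γ * ‖w‖ ≤ κ * ‖T ρ‖ := by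
    linear_combination hbasic + hCS + mul_le_mul_of_nonneg_left hpen hlam.le +
      mul_le_mul_of_nonneg_left hρ' (mul_nonneg hlam.le M.coe_nonneg)
  have hw' : lam * γ * ‖w‖ ≤ κ ^ 2 / 2 := by nlinarith [sq_nonneg (‖T ρ‖ - κ)]
  have hTρ : ‖T ρ‖ ≤ 2 * κ := by
    nlinarith [norm_nonneg (T ρ), mul_nonneg (mul_nonneg hlam.le hγ.le) (norm_nonneg w)]
  calc ‖b - r • β‖ = ‖w + ρ‖ := by rw [hdecomp]
    _ ≤ ‖w‖ + ‖ρ‖ := norm_add_le _ _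
    _ ≤ _ := by
      gcongr
      · rw [le_div_iff₀ (by positivity)]
        linarith
      · exact hρ'.trans (by gcongr)

end PolyhedralLasso

theorem Smin_eq_setOf_isMinOn {n p : ℕ} (X : Matrix (Fin n) (Fin p) ℝ) (lam : ℝ)
    (pen : EuclideanSpace ℝ (Fin p) → ℝ) (y : EuclideanSpace ℝ (Fin n)) :
    Smin X lam pen y = {b | IsMinOn
      (lassoObjective (Matrix.toEuclideanLin X).toContinuousLinearMap lam pen y) univ b} := by
  ext b
  rw [mem_ofPred_eq, isMinOn_univ_iff]
  rfl

theorem exists_norm_sub_smul_le_of_Smin_eq_singleton {n p : ℕ} {ι : Type*} [Fintype ι]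
    [Nonempty ι] (X : Matrix (Fin n) (Fin p) ℝ) {lam : ℝ} (hlam : 0 < lam)
    (u : ι → EuclideanSpace ℝ (Fin p)) {β : EuclideanSpace ℝ (Fin p)}
    {betahat : EuclideanSpace ℝ (Fin n) → EuclideanSpace ℝ (Fin p)}
    (huniq : ∀ y, Smin X lam (polyGauge u) y = {betahat y})
    (hmin : ∀ b : EuclideanSpace ℝ (Fin p), X.mulVec b = X.mulVec β → polyGauge u β ≤ polyGauge u b)
    (ε : EuclideanSpace ℝ (Fin n)) :
    ∃ R, ∀ r : ℝ, 0 < r → ‖betahat (toEuc (X.mulVec (r • β)) + ε) - r • β‖ ≤ R := by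
  set T := (Matrix.toEuclideanLin X).toContinuousLinearMap
  have hker : ∀ w ∈ T.ker, polyGauge u β ≤ polyGauge u (β + w) := fun w hw =>
    hmin _ (congrArg WithLp.ofLp (show T (β + w) = T β by
      rw [map_add, show T w = 0 from hw, add_zero]))
  have hsubsingleton (y) :
      {b | IsMinOn (lassoObjective T lam (polyGauge u) y) univ b}.Subsingleton := by
    rw [← Smin_eq_setOf_isMinOn, huniq]
    exact subsingleton_singleton
  obtain ⟨R, hR⟩ := exists_norm_sub_smul_le T hker hsubsingleton hlam ε
  refine ⟨R, fun r hr => hR r hr _ ?_⟩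
  change _ ∈ {b | IsMinOn (lassoObjective T lam (polyGauge u) _) univ b}
  rw [← Smin_eq_setOf_isMinOn, huniq]
  rfl

theorem thresholded_pattern_recovery_general {n p k : ℕ}
    (X : Matrix (Fin n) (Fin p) ℝ) (lam : ℝ) (hlam : 0 < lam)
    (u : Fin (k + 1) → EuclideanSpace ℝ (Fin p))
    (pen : EuclideanSpace ℝ (Fin p) → ℝ)
    (hpen : ∀ x, pen x = Finset.univ.sup' Finset.univ_nonempty fun i => ⟪u i, x⟫)
    (β : EuclideanSpace ℝ (Fin p)) (ε : EuclideanSpace ℝ (Fin n))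
    (betahat : EuclideanSpace ℝ (Fin n) → EuclideanSpace ℝ (Fin p))
    (huniq : ∀ y, Smin X lam pen y = {betahat y})
    (hmin : ∀ b : EuclideanSpace ℝ (Fin p), X.mulVec b = X.mulVec β → pen β ≤ pen b) :
    ∃ r₀ : ℕ, ∃ τ₀ > (0 : ℝ), ∀ r : ℕ, r₀ ≤ r →
      (∀ b : EuclideanSpace ℝ (Fin p),
          supNorm (b - betahat (toEuc (X.mulVec ((r : ℝ) • β)) + ε)) ≤ (r : ℝ) * τ₀ / 2 →
          subdiff pen b ⊆ subdiff pen β)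
      ∧ ∃ b₀ : EuclideanSpace ℝ (Fin p),
          supNorm (b₀ - betahat (toEuc (X.mulVec ((r : ℝ) • β)) + ε)) ≤ (r : ℝ) * τ₀ / 2
          ∧ subdiff pen b₀ = subdiff pen β := by
  obtain rfl : pen = polyGauge u := funext hpen
  obtain ⟨τ, hτ, hsub⟩ := exists_subdiff_polyGauge_subset u β
  obtain ⟨R, hR⟩ := exists_norm_sub_smul_le_of_Smin_eq_singleton X hlam u huniq hmin ε
  set τ₀ := 2 * τ / (√p + 1)
  have hτ₀ : 0 < τ₀ := by positivity
  have hτ₀τ : (√p + 1) * (τ₀ / 2) = τ := by simp only [τ₀]; field_simp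
  obtain ⟨r₀, hr₀⟩ := exists_nat_gt (max (2 * R / τ₀) 0)
  refine ⟨r₀, τ₀, hτ₀, fun r hr => ?_⟩
  have hr_gt : max (2 * R / τ₀) 0 < r := hr₀.trans_le (by exact_mod_cast hr)
  have hr0 : (0 : ℝ) < r := (le_max_right _ _).trans_lt hr_gt
  have hfit : ‖betahat (toEuc (X.mulVec ((r : ℝ) • β)) + ε) - (r : ℝ) • β‖ ≤ r * (τ₀ / 2) := by
    have := (le_max_left _ _).trans_lt hr_gt
    rw [div_lt_iff₀ hτ₀] at this
    linarith [hR r hr0]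
  refine ⟨fun b hb => ?_, (r : ℝ) • β, ?_, subdiff_polyGauge_smul u hr0 β⟩
  · rw [mul_div_assoc] at hb
    rw [← subdiff_polyGauge_smul u (inv_pos.2 hr0)]
    exact hsub _ ((norm_inv_smul_sub_le_of_supNorm_sub_le hr0 hb hfit).trans hτ₀τ.le)
  · rw [mul_div_assoc]
    exact (supNorm_le_norm _).trans (by rwa [norm_sub_rev])

/-- Under uniform uniqueness, if `pen(b) ≥ pen(β)` whenever `Xb = Xβ`, then
for `y⁽ʳ⁾ = X(rβ) + ε` there are `r₀` and `τ₀ > 0` such that for all `r ≥ r₀`, with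
`τ = r·τ₀/2`: every `b` within sup-distance `τ` of `β̂(y⁽ʳ⁾)` has `∂pen(b) ⊆ ∂pen(β)`,
and some `b₀` within sup-distance `τ` has `∂pen(b₀) = ∂pen(β)`. -/
theorem thresholded_pattern_recovery {n p k : ℕ}
    (X : Matrix (Fin n) (Fin p) ℝ) (lam : ℝ) (hlam : 0 < lam)
    (u : Fin (k + 1) → EuclideanSpace ℝ (Fin p)) (hu : u 0 = 0)
    (pen : EuclideanSpace ℝ (Fin p) → ℝ)
    (hpen : ∀ x, pen x = Finset.univ.sup' Finset.univ_nonempty fun i => ⟪u i, x⟫)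
    (β : EuclideanSpace ℝ (Fin p)) (ε : EuclideanSpace ℝ (Fin n))
    (betahat : EuclideanSpace ℝ (Fin n) → EuclideanSpace ℝ (Fin p))
    (huniq : ∀ y, Smin X lam pen y = {betahat y})
    (hmin : ∀ b : EuclideanSpace ℝ (Fin p), X.mulVec b = X.mulVec β → pen β ≤ pen b) :
    ∃ r₀ : ℕ, ∃ τ₀ > (0 : ℝ), ∀ r : ℕ, r₀ ≤ r →
      (∀ b : EuclideanSpace ℝ (Fin p),
          supNorm (b - betahat (toEuc (X.mulVec ((r : ℝ) • β)) + ε)) ≤ (r : ℝ) * τ₀ / 2 →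
          subdiff pen b ⊆ subdiff pen β)
      ∧ ∃ b₀ : EuclideanSpace ℝ (Fin p),
          supNorm (b₀ - betahat (toEuc (X.mulVec ((r : ℝ) • β)) + ε)) ≤ (r : ℝ) * τ₀ / 2
          ∧ subdiff pen b₀ = subdiff pen β :=
  thresholded_pattern_recovery_general X lam hlam u pen hpen β ε betahat huniq hmin
end
end

section
/- Let X ∈ ℝ^{n×p}, β ∈ ℝ^p, and let pen be a real-valued polyhedral gauge on ℝ^p (pen(b) = max{⟨u_1,b⟩,…,⟨u_k,b⟩} with u_1 = 0). The following are equivalent: (i) there exist λ > 0 and β̂ ∈ S_{X,λpen}(Xβ) with ∂pen(β̂) = ∂pen(β) (the noiseless recovery condition); (ii) the image under XᵀX of the linear span of C_β intersects ∂pen(β); (iii) the image under XᵀX of the orthogonal complement of the direction space of the affine hull of ∂pen(β) intersects ∂pen(β). -/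
open scoped RealInnerProductSpace

noncomputable section

/-!
Write `C_β` for the pattern class of `β` and `D` for the direction of the affine hull of `∂pen(β)`.
Since `pen` is positively homogeneous, `s ∈ ∂pen(x)` iff `⟪s, ·⟫ ≤ pen` with equality at `x`, so
every `x ∈ C_β` is orthogonal to `D`. Conversely, if `v ⊥ D` then all maximizing `u i` at `β` have
the same inner product with `v`, so `pen` is affine along `β + δ v` for small `δ`, which keeps
`∂pen(β + δ v) = ∂pen(β)`; hence `span C_β = Dᗮ`, which is (ii) ⇔ (iii).
The first-order optimality condition says `β̂ ∈ S_{X,λpen}(Xβ)` iff `XᵀX (β - β̂) / λ ∈ ∂pen(β̂)`.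
This gives (i) ⇒ (ii) at once; for (ii) ⇒ (i), given `XᵀX v ∈ ∂pen(β)` with `v ⊥ D`, take
`λ = ε` small and `β̂ = β - ε v`.
-/

open Filter Topology Set Submodule

section MaxInner

variable {E : Type*} [NormedAddCommGroup E] [InnerProductSpace ℝ E]
  {ι : Type*} [Fintype ι] [Nonempty ι]

def maxInner (u : ι → E) (x : E) : ℝ :=
  Finset.univ.sup' Finset.univ_nonempty fun i => ⟪u i, x⟫

variable (u : ι → E)

lemma inner_le_maxInner (i : ι) (x : E) : ⟪u i, x⟫ ≤ maxInner u x :=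
  Finset.le_sup' (fun i => ⟪u i, x⟫) (Finset.mem_univ i)

lemma maxInner_le_iff {x : E} {a : ℝ} : maxInner u x ≤ a ↔ ∀ i, ⟪u i, x⟫ ≤ a := by
  simp [maxInner, Finset.sup'_le_iff]

lemma exists_inner_eq_maxInner (x : E) : ∃ i, ⟪u i, x⟫ = maxInner u x := by
  obtain ⟨i, -, hi⟩ := Finset.exists_mem_eq_sup' Finset.univ_nonempty fun i => ⟪u i, x⟫
  exact ⟨i, hi.symm⟩

lemma maxInner_smul {t : ℝ} (ht : 0 ≤ t) (x : E) : maxInner u (t • x) = t * maxInner u x := by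
  obtain ⟨i, hi⟩ := exists_inner_eq_maxInner u x
  refine le_antisymm ((maxInner_le_iff u).2 fun j => ?_) ?_
  · rw [real_inner_smul_right]
    exact mul_le_mul_of_nonneg_left (inner_le_maxInner u j x) ht
  · calc t * maxInner u x = ⟪u i, t • x⟫ := by rw [real_inner_smul_right, hi]
      _ ≤ maxInner u (t • x) := inner_le_maxInner u i _

lemma convexOn_maxInner : ConvexOn ℝ univ (maxInner u) := by
  refine ⟨convex_univ, fun x _ y _ a b ha hb _ => (maxInner_le_iff u).2 fun i => ?_⟩
  rw [inner_add_right, real_inner_smul_right, real_inner_smul_right, smul_eq_mul, smul_eq_mul]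
  gcongr <;> exact inner_le_maxInner u i _

lemma eventually_maxInner_add_smul {β v : E} {i₀ : ι} (hi₀ : ⟪u i₀, β⟫ = maxInner u β)
    (hv : ∀ i, ⟪u i, β⟫ = maxInner u β → ⟪u i, v⟫ = ⟪u i₀, v⟫) :
    ∀ᶠ δ in 𝓝 (0 : ℝ), maxInner u (β + δ • v) = maxInner u β + δ * ⟪u i₀, v⟫ := by
  have hslack : ∀ i, ∀ᶠ δ in 𝓝 (0 : ℝ), ⟪u i, β⟫ + δ * ⟪u i, v⟫ ≤ maxInner u β + δ * ⟪u i₀, v⟫ := by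
    intro i
    rcases (inner_le_maxInner u i β).eq_or_lt with hi | hi
    · exact Eventually.of_forall fun δ => by rw [hi, hv i hi]
    · exact (ContinuousAt.eventually_lt (by fun_prop) (by fun_prop) (by simpa using hi)).mono
        fun _ h => h.le
  filter_upwards [eventually_all.2 hslack] with δ hδ
  refine le_antisymm ((maxInner_le_iff u).2 fun i => ?_) ?_
  · simpa only [inner_add_right, real_inner_smul_right] using hδ i
  · calc maxInner u β + δ * ⟪u i₀, v⟫ = ⟪u i₀, β + δ • v⟫ := by
          rw [inner_add_right, real_inner_smul_right, hi₀]
      _ ≤ maxInner u (β + δ • v) := inner_le_maxInner u i₀ _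

end MaxInner

lemma inner_eq_of_mem_orthogonal_direction {E : Type*} [NormedAddCommGroup E]
    [InnerProductSpace ℝ E] {S : Set E} {s t v : E} (hs : s ∈ S) (ht : t ∈ S)
    (hv : v ∈ (affineSpan ℝ S).directionᗮ) : ⟪s, v⟫ = ⟪t, v⟫ := by
  have hst : s - t ∈ (affineSpan ℝ S).direction :=
    AffineSubspace.vsub_mem_direction (subset_affineSpan ℝ S hs) (subset_affineSpan ℝ S ht)
  rw [← sub_eq_zero, ← inner_sub_left]
  exact (mem_orthogonal _ v).1 hv _ hst

section Subdiff

variable {p : ℕ} {φ : EuclideanSpace ℝ (Fin p) → ℝ}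
  (hφ : ∀ t : ℝ, 0 ≤ t → ∀ x, φ (t • x) = t * φ x)
include hφ

lemma mem_subdiff_iff_of_smul {s x : EuclideanSpace ℝ (Fin p)} :
    s ∈ subdiff φ x ↔ (∀ b, ⟪s, b⟫ ≤ φ b) ∧ ⟪s, x⟫ = φ x := by
  have hφ0 : φ 0 = 0 := by simpa using hφ 0 le_rfl 0
  constructor
  · intro h
    have h0 := h 0
    have h2 := h ((2 : ℝ) • x)
    rw [hφ0, zero_sub, inner_neg_right] at h0
    rw [hφ 2 zero_le_two, two_smul, add_sub_cancel_right] at h2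
    refine ⟨fun b => ?_, by linarith⟩
    have hb := h b
    rw [inner_sub_right] at hb
    linarith
  · rintro ⟨hle, heq⟩ b
    rw [inner_sub_right, heq]
    linarith [hle b]

lemma subdiff_subset_of_add_eq {x y z : EuclideanSpace ℝ (Fin p)} (hxyz : y + z = (2 : ℝ) • x)
    (h : φ y + φ z = 2 * φ x) : subdiff φ x ⊆ subdiff φ y := by
  intro s hs
  rw [mem_subdiff_iff_of_smul hφ] at hs ⊢
  refine ⟨hs.1, le_antisymm (hs.1 y) ?_⟩
  have hsum : ⟪s, y⟫ + ⟪s, z⟫ = 2 * ⟪s, x⟫ := by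
    rw [← inner_add_right, hxyz, real_inner_smul_right]
  linarith [hs.1 z, hs.2]

lemma eventually_subdiff_add_smul_eq {β v : EuclideanSpace ℝ (Fin p)} {c : ℝ}
    (hlin : ∀ᶠ δ in 𝓝 (0 : ℝ), φ (β + δ • v) = φ β + δ * c) :
    ∀ᶠ δ in 𝓝 (0 : ℝ), subdiff φ (β + δ • v) = subdiff φ β := by
  have hlin_two : ∀ᶠ δ in 𝓝 (0 : ℝ), φ (β + (2 * δ) • v) = φ β + 2 * δ * c :=
    ((continuous_const_mul 2).tendsto' 0 0 (mul_zero 2)).eventually hlin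
  have hlin_neg : ∀ᶠ δ in 𝓝 (0 : ℝ), φ (β + (-δ) • v) = φ β + -δ * c :=
    (continuous_neg.tendsto' 0 0 neg_zero).eventually hlin
  filter_upwards [hlin, hlin_two, hlin_neg] with δ h₁ h₂ h₃
  refine subset_antisymm (subdiff_subset_of_add_eq hφ (z := β + (2 * δ) • v) ?_ ?_)
    (subdiff_subset_of_add_eq hφ (z := β + (-δ) • v) ?_ ?_)
  · module
  · rw [h₁, h₂]; ring
  · module
  · rw [h₁, h₃]; ring

lemma span_setOf_subdiff_eq_le_orthogonal (β : EuclideanSpace ℝ (Fin p)) :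
    span ℝ {x | subdiff φ x = subdiff φ β} ≤ (affineSpan ℝ (subdiff φ β)).directionᗮ := by
  rw [← isOrtho_iff_le, direction_affineSpan, vectorSpan_def, isOrtho_span]
  rintro x (hx : subdiff φ x = subdiff φ β) _ ⟨s, hs, t, ht, rfl⟩
  rw [← hx, mem_subdiff_iff_of_smul hφ] at hs ht
  change ⟪x, s - t⟫ = 0
  rw [inner_sub_right, real_inner_comm, hs.2, real_inner_comm, ht.2, sub_self]

end Subdiff

section SubdiffMaxInner

variable {p : ℕ} {ι : Type*} [Fintype ι] [Nonempty ι] (u : ι → EuclideanSpace ℝ (Fin p))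

lemma mem_subdiff_maxInner_of_inner_eq {x : EuclideanSpace ℝ (Fin p)} {i : ι}
    (hi : ⟪u i, x⟫ = maxInner u x) : u i ∈ subdiff (maxInner u) x :=
  (mem_subdiff_iff_of_smul (fun _ ht => maxInner_smul u ht)).2 ⟨inner_le_maxInner u i, hi⟩

lemma eventually_subdiff_maxInner_add_smul_eq {β v : EuclideanSpace ℝ (Fin p)}
    (hv : v ∈ (affineSpan ℝ (subdiff (maxInner u) β)).directionᗮ) :
    ∀ᶠ δ in 𝓝 (0 : ℝ), subdiff (maxInner u) (β + δ • v) = subdiff (maxInner u) β := by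
  obtain ⟨i₀, hi₀⟩ := exists_inner_eq_maxInner u β
  refine eventually_subdiff_add_smul_eq (fun _ ht => maxInner_smul u ht)
    (eventually_maxInner_add_smul u hi₀ fun i hi => ?_)
  exact inner_eq_of_mem_orthogonal_direction (mem_subdiff_maxInner_of_inner_eq u hi)
    (mem_subdiff_maxInner_of_inner_eq u hi₀) hv

lemma exists_pos_subdiff_maxInner_sub_smul_eq {β v : EuclideanSpace ℝ (Fin p)}
    (hv : v ∈ (affineSpan ℝ (subdiff (maxInner u) β)).directionᗮ) :
    ∃ ε > (0 : ℝ), subdiff (maxInner u) (β - ε • v) = subdiff (maxInner u) β := by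
  obtain ⟨δ, hδ, hδneg⟩ := ((eventually_subdiff_maxInner_add_smul_eq u hv).filter_mono
    nhdsWithin_le_nhds |>.and self_mem_nhdsWithin : ∀ᶠ δ in 𝓝[<] (0 : ℝ), _ ∧ δ < 0).exists
  exact ⟨-δ, neg_pos.2 hδneg, by rwa [neg_smul, sub_neg_eq_add]⟩

lemma span_setOf_subdiff_maxInner_eq (β : EuclideanSpace ℝ (Fin p)) :
    span ℝ {x | subdiff (maxInner u) x = subdiff (maxInner u) β}
      = (affineSpan ℝ (subdiff (maxInner u) β)).directionᗮ := by
  refine le_antisymm (span_setOf_subdiff_eq_le_orthogonal (fun _ ht => maxInner_smul u ht) β)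
    fun v hv => ?_
  obtain ⟨ε, hε, hsub⟩ := exists_pos_subdiff_maxInner_sub_smul_eq u hv
  have hmem : β - (β - ε • v) ∈ span ℝ {x | subdiff (maxInner u) x = subdiff (maxInner u) β} :=
    sub_mem (subset_span rfl) (subset_span hsub)
  rw [sub_sub_cancel] at hmem
  simpa [hε.ne'] using smul_mem _ ε⁻¹ hmem

end SubdiffMaxInner

lemma isMinOn_half_sq_norm_sub_add_iff {E F : Type*} [NormedAddCommGroup E]
    [InnerProductSpace ℝ E] [NormedAddCommGroup F] [InnerProductSpace ℝ F] {A : E →ₗ[ℝ] F}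
    {φ : E → ℝ} (hφ : ConvexOn ℝ univ φ) (y : F) (b₀ : E) :
    IsMinOn (fun b => (1 / 2) * ‖y - A b‖ ^ 2 + φ b) univ b₀
      ↔ ∀ b, φ b₀ + ⟪y - A b₀, A (b - b₀)⟫ ≤ φ b := by
  have hexpand : ∀ b (t : ℝ), ‖y - A (b₀ + t • (b - b₀))‖ ^ 2
      = ‖y - A b₀‖ ^ 2 - 2 * t * ⟪y - A b₀, A (b - b₀)⟫ + t ^ 2 * ‖A (b - b₀)‖ ^ 2 := by
    intro b t
    rw [map_add, map_smul, ← sub_sub, norm_sub_sq_real, real_inner_smul_right, norm_smul,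
      mul_pow, Real.norm_eq_abs, sq_abs]
    ring
  rw [isMinOn_univ_iff]
  constructor
  · intro hmin b
    have hstep : ∀ t ∈ Ioc (0 : ℝ) 1,
        φ b₀ + ⟪y - A b₀, A (b - b₀)⟫ ≤ φ b + t / 2 * ‖A (b - b₀)‖ ^ 2 := by
      rintro t ⟨ht₀, ht₁⟩
      have hconv : φ (b₀ + t • (b - b₀)) ≤ (1 - t) * φ b₀ + t * φ b := by
        have hseg : b₀ + t • (b - b₀) = (1 - t) • b₀ + t • b := by module
        rw [hseg]
        exact hφ.2 (mem_univ b₀) (mem_univ b) (sub_nonneg.2 ht₁) ht₀.le (sub_add_cancel 1 t)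
      have := hmin (b₀ + t • (b - b₀))
      rw [hexpand] at this
      have hmul : t * (φ b₀ + ⟪y - A b₀, A (b - b₀)⟫)
          ≤ t * (φ b + t / 2 * ‖A (b - b₀)‖ ^ 2) := by nlinarith
      exact le_of_mul_le_mul_left hmul ht₀
    refine ge_of_tendsto (f := fun t => φ b + t / 2 * ‖A (b - b₀)‖ ^ 2) (x := 𝓝[>] 0) ?_
      (mem_of_superset (Ioc_mem_nhdsGT zero_lt_one) hstep)
    exact tendsto_nhdsWithin_of_tendsto_nhds
      ((by fun_prop : Continuous fun t : ℝ => φ b + t / 2 * ‖A (b - b₀)‖ ^ 2).tendsto' 0 _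
        (by simp))
  · intro hsub b
    have := hexpand b 1
    rw [one_smul, add_sub_cancel] at this
    rw [this]
    nlinarith [hsub b, sq_nonneg ‖A (b - b₀)‖]

lemma inner_toEuc_transpose_mul_mulVec {n p : ℕ} (X : Matrix (Fin n) (Fin p) ℝ)
    (v w : EuclideanSpace ℝ (Fin p)) :
    ⟪toEuc ((X.transpose * X).mulVec v), w⟫ = ⟪toEuc (X.mulVec v), toEuc (X.mulVec w)⟫ := by
  simp only [EuclideanSpace.inner_eq_star_dotProduct, toEuc, star_trivial]
  simp [← Matrix.mulVec_mulVec, Matrix.dotProduct_mulVec, Matrix.vecMul_transpose, dotProduct_comm]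

lemma mem_Smin_mulVec_iff {n p : ℕ} {X : Matrix (Fin n) (Fin p) ℝ} {lam : ℝ} (hlam : 0 < lam)
    {φ : EuclideanSpace ℝ (Fin p) → ℝ} (hφ : ConvexOn ℝ univ φ) (β βh : EuclideanSpace ℝ (Fin p)) :
    βh ∈ Smin X lam φ (toEuc (X.mulVec β))
      ↔ toEuc ((X.transpose * X).mulVec (lam⁻¹ • (β - βh) : EuclideanSpace ℝ (Fin p)))
        ∈ subdiff φ βh := by
  set A := Matrix.toLpLin 2 2 X
  have hopt := isMinOn_half_sq_norm_sub_add_iff (A := A) (hφ.smul hlam.le) (toEuc (X.mulVec β)) βh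
  rw [isMinOn_univ_iff] at hopt
  refine hopt.trans (forall_congr' fun b => ?_)
  have hXv : toEuc (X.mulVec (lam⁻¹ • (β - βh) : EuclideanSpace ℝ (Fin p)))
      = lam⁻¹ • (A β - A βh) := by
    rw [← map_sub, ← map_smul]; rfl
  rw [inner_toEuc_transpose_mul_mulVec, hXv, real_inner_smul_left]
  change lam * φ βh + ⟪A β - A βh, A (b - βh)⟫ ≤ lam * φ b
    ↔ φ βh + lam⁻¹ * ⟪A β - A βh, A (b - βh)⟫ ≤ φ b
  conv_rhs => rw [← mul_le_mul_iff_right₀ hlam, mul_add, mul_inv_cancel_left₀ hlam.ne']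

theorem noiseless_recovery_geometric_general {n p k : ℕ}
    (X : Matrix (Fin n) (Fin p) ℝ)
    (u : Fin (k + 1) → EuclideanSpace ℝ (Fin p))
    (pen : EuclideanSpace ℝ (Fin p) → ℝ)
    (hpen : ∀ x, pen x = Finset.univ.sup' Finset.univ_nonempty fun i => ⟪u i, x⟫)
    (β : EuclideanSpace ℝ (Fin p)) :
    ((∃ lam > 0, ∃ βh ∈ Smin X lam pen (toEuc (X.mulVec β)),
        subdiff pen βh = subdiff pen β)
      ↔ (((fun v : EuclideanSpace ℝ (Fin p) => toEuc ((X.transpose * X).mulVec v)) ''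
            (Submodule.span ℝ {x | subdiff pen x = subdiff pen β} :
              Set (EuclideanSpace ℝ (Fin p))))
          ∩ subdiff pen β).Nonempty)
    ∧ ((((fun v : EuclideanSpace ℝ (Fin p) => toEuc ((X.transpose * X).mulVec v)) ''
            (Submodule.span ℝ {x | subdiff pen x = subdiff pen β} :
              Set (EuclideanSpace ℝ (Fin p))))
          ∩ subdiff pen β).Nonempty
      ↔ (((fun v : EuclideanSpace ℝ (Fin p) => toEuc ((X.transpose * X).mulVec v)) ''
            ((((affineSpan ℝ (subdiff pen β)).direction)ᗮ :
              Submodule ℝ (EuclideanSpace ℝ (Fin p))) :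
              Set (EuclideanSpace ℝ (Fin p))))
          ∩ subdiff pen β).Nonempty) := by
  obtain rfl : pen = maxInner u := funext hpen
  have hspan := span_setOf_subdiff_maxInner_eq u β
  refine ⟨⟨?_, ?_⟩, by rw [hspan]⟩
  · rintro ⟨lam, hlam, βh, hβh, hsub⟩
    refine ⟨_, ⟨lam⁻¹ • (β - βh), ?_, rfl⟩, ?_⟩
    · exact smul_mem _ _ (sub_mem (subset_span rfl) (subset_span hsub))
    · rw [← hsub]
      exact (mem_Smin_mulVec_iff hlam (convexOn_maxInner u) β βh).1 hβh
  · rintro ⟨_, ⟨v, hv, rfl⟩, hs⟩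
    rw [SetLike.mem_coe, hspan] at hv
    obtain ⟨ε, hε, hsub⟩ := exists_pos_subdiff_maxInner_sub_smul_eq u hv
    refine ⟨ε, hε, β - ε • v, ?_, hsub⟩
    rw [mem_Smin_mulVec_iff hε (convexOn_maxInner u), hsub, sub_sub_cancel, inv_smul_smul₀ hε.ne']
    exact hs

/-- Geometric characterization of the noiseless recovery condition:
(i) noiseless recovery for `β`, (ii) `XᵀX·lin(C_β) ∩ ∂pen(β) ≠ ∅`, and (iii)
`XᵀX·(vec-aff(∂pen(β)))^⊥ ∩ ∂pen(β) ≠ ∅` are all equivalent. -/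
theorem noiseless_recovery_geometric {n p k : ℕ}
    (X : Matrix (Fin n) (Fin p) ℝ)
    (u : Fin (k + 1) → EuclideanSpace ℝ (Fin p)) (hu : u 0 = 0)
    (pen : EuclideanSpace ℝ (Fin p) → ℝ)
    (hpen : ∀ x, pen x = Finset.univ.sup' Finset.univ_nonempty fun i => ⟪u i, x⟫)
    (β : EuclideanSpace ℝ (Fin p)) :
    ((∃ lam > 0, ∃ βh ∈ Smin X lam pen (toEuc (X.mulVec β)),
        subdiff pen βh = subdiff pen β)
      ↔ (((fun v : EuclideanSpace ℝ (Fin p) => toEuc ((X.transpose * X).mulVec v)) ''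
            (Submodule.span ℝ {x | subdiff pen x = subdiff pen β} :
              Set (EuclideanSpace ℝ (Fin p))))
          ∩ subdiff pen β).Nonempty)
    ∧ ((((fun v : EuclideanSpace ℝ (Fin p) => toEuc ((X.transpose * X).mulVec v)) ''
            (Submodule.span ℝ {x | subdiff pen x = subdiff pen β} :
              Set (EuclideanSpace ℝ (Fin p))))
          ∩ subdiff pen β).Nonempty
      ↔ (((fun v : EuclideanSpace ℝ (Fin p) => toEuc ((X.transpose * X).mulVec v)) ''
            ((((affineSpan ℝ (subdiff pen β)).direction)ᗮ :
              Submodule ℝ (EuclideanSpace ℝ (Fin p))) :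
              Set (EuclideanSpace ℝ (Fin p))))
          ∩ subdiff pen β).Nonempty) :=
  noiseless_recovery_geometric_general X u pen hpen β
end
end

section
/- Let s_1,…,s_m ∈ ℝ^p and r_1,…,r_m ∈ ℝ, let P be the polyhedron {b ∈ ℝ^p : ⟨s_l,b⟩ ≤ r_l for all l ∈ {1,…,m}}, let b̄ ∈ P, let Ī = {l : ⟨s_l,b̄⟩ = r_l}, and let F = {b ∈ P : ⟨s_l,b⟩ = r_l for all l ∈ Ī}. Then the linear span of the normal cone N_P(b̄) equals the orthogonal complement of the direction space of the affine hull of F, i.e. lin(N_P(b̄)) = (vec-aff(F))^⊥. -/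
open scoped RealInnerProductSpace

noncomputable section

/-!
Let `M` be the span of the normals `s l` of the constraints active at `b̄`. Every active normal
lies in `N_P(b̄)`. Conversely, from `b̄` one can move a little in both senses along any `w ∈ Mᗮ`
without leaving `F`, because the inactive constraints are strict at `b̄` and the active ones do
not see `w`. Hence `vec-aff(F) = Mᗮ`, and by Fermat's rule every `v ∈ N_P(b̄)` is orthogonal to
`Mᗮ`, so `lin(N_P(b̄)) = M = Mᗮᗮ`.
-/

open Filter Topology Submodule

section Polyhedron

variable {ι E : Type*} [NormedAddCommGroup E] [InnerProductSpace ℝ E]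
  (s : ι → E) (r : ι → ℝ)

def polyhedron : Set E := {b | ∀ l, ⟪s l, b⟫ ≤ r l}

def activeSpan (x : E) : Submodule ℝ E := span ℝ (s '' {l | ⟪s l, x⟫ = r l})

def activeFace (x : E) : Set E :=
  {b ∈ polyhedron s r | ∀ l, ⟪s l, x⟫ = r l → ⟪s l, b⟫ = r l}

instance [Finite ι] (x : E) : FiniteDimensional ℝ (activeSpan s r x) :=
  FiniteDimensional.span_of_finite ℝ (Set.toFinite _)

variable {s r} {x : E}

theorem mem_orthogonal_activeSpan_iff {w : E} :
    w ∈ (activeSpan s r x)ᗮ ↔ ∀ l, ⟪s l, x⟫ = r l → ⟪s l, w⟫ = 0 := by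
  rw [activeSpan, ← span_singleton_le_iff_mem, ← isOrtho_iff_le, isOrtho_span]
  simp [real_inner_comm w]

theorem eventually_add_smul_mem_activeFace [Finite ι] (hx : x ∈ polyhedron s r) {w : E}
    (hw : w ∈ (activeSpan s r x)ᗮ) : ∀ᶠ t in 𝓝 (0 : ℝ), x + t • w ∈ activeFace s r x := by
  rw [mem_orthogonal_activeSpan_iff] at hw
  have inner_eq (l : ι) (t : ℝ) : ⟪s l, x + t • w⟫ = ⟪s l, x⟫ + t * ⟪s l, w⟫ := by
    rw [inner_add_right, real_inner_smul_right]
  have hP : ∀ᶠ t in 𝓝 (0 : ℝ), ∀ l, ⟪s l, x + t • w⟫ ≤ r l := by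
    refine eventually_all.2 fun l => ?_
    rcases (hx l).lt_or_eq with hlt | heq
    · have hcont : Continuous fun t : ℝ => ⟪s l, x + t • w⟫ := by fun_prop
      filter_upwards [hcont.continuousAt.eventually_lt continuousAt_const (by simpa using hlt)]
        with t ht using ht.le
    · exact .of_forall fun t => by simp [inner_eq, hw l heq, heq]
  filter_upwards [hP] with t ht
  exact ⟨ht, fun l hl => by simp [inner_eq, hw l hl, hl]⟩

theorem direction_affineSpan_activeFace [Finite ι] (hx : x ∈ polyhedron s r) :
    (affineSpan ℝ (activeFace s r x)).direction = (activeSpan s r x)ᗮ := by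
  refine le_antisymm ?_ fun w hw => ?_
  · rw [direction_affineSpan, vectorSpan_def, span_le]
    intro v hv
    obtain ⟨b, hb, c, hc, rfl⟩ := Set.mem_vsub.1 hv
    refine mem_orthogonal_activeSpan_iff.2 fun l hl => ?_
    rw [vsub_eq_sub, inner_sub_right, hb.2 l hl, hc.2 l hl, sub_self]
  · have hxF : x ∈ activeFace s r x := ⟨hx, fun _ hl => hl⟩
    obtain ⟨t, htF, ht0⟩ := ((eventually_add_smul_mem_activeFace hx hw).filter_mono
      nhdsWithin_le_nhds |>.and self_mem_nhdsWithin).exists (f := 𝓝[≠] (0 : ℝ))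
    have := AffineSubspace.vsub_mem_direction (subset_affineSpan ℝ _ htF)
      (subset_affineSpan ℝ _ hxF)
    rwa [vsub_eq_sub, add_sub_cancel_left, smul_mem_iff _ ht0] at this

theorem normalCone_subset_activeSpan [Finite ι] (hx : x ∈ polyhedron s r) :
    {v | ∀ b ∈ polyhedron s r, ⟪v, b - x⟫ ≤ 0} ⊆ activeSpan s r x := by
  intro v hv
  rw [← orthogonal_orthogonal (activeSpan s r x)]
  refine fun w hw => inner_eq_zero_symm.1 ?_
  have hmax : IsLocalMax (fun t : ℝ => t * ⟪v, w⟫) 0 := by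
    filter_upwards [eventually_add_smul_mem_activeFace hx hw] with t ht
    simpa [real_inner_smul_right, mul_comm] using hv _ ht.1
  exact hmax.hasDerivAt_eq_zero (hasDerivAt_mul_const _)

theorem span_normalCone_eq_activeSpan [Finite ι] (hx : x ∈ polyhedron s r) :
    span ℝ {v | ∀ b ∈ polyhedron s r, ⟪v, b - x⟫ ≤ 0} = activeSpan s r x := by
  refine le_antisymm (span_le.2 (normalCone_subset_activeSpan hx)) (span_mono ?_)
  rintro _ ⟨l, hl, rfl⟩ b hb
  rw [inner_sub_right, hl]
  linarith [hb l]

end Polyhedron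

/-- For a polyhedron `P = {b : ⟪s_l,b⟫ ≤ r_l ∀l}`, a point `b̄ ∈ P`, and
the smallest face `F = {b ∈ P : ⟪s_l,b⟫ = r_l ∀ l ∈ Ī}` with `Ī = {l : ⟪s_l,b̄⟫ = r_l}`,
the linear span of the normal cone `N_P(b̄)` equals `(vec-aff(F))^⊥`. -/
theorem span_normalCone_eq_orthogonal {p m : ℕ}
    (s : Fin m → EuclideanSpace ℝ (Fin p)) (r : Fin m → ℝ)
    (bbar : EuclideanSpace ℝ (Fin p))
    (hbbar : ∀ l, ⟪s l, bbar⟫ ≤ r l) :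
    Submodule.span ℝ
        (normalCone' {b : EuclideanSpace ℝ (Fin p) | ∀ l, ⟪s l, b⟫ ≤ r l} bbar)
      = ((affineSpan ℝ {b : EuclideanSpace ℝ (Fin p) |
            (∀ l, ⟪s l, b⟫ ≤ r l) ∧
            ∀ l, ⟪s l, bbar⟫ = r l → ⟪s l, b⟫ = r l}).direction)ᗮ := by
  have hx : bbar ∈ polyhedron s r := hbbar
  calc span ℝ (normalCone' (polyhedron s r) bbar) = activeSpan s r bbar :=
        span_normalCone_eq_activeSpan hx
    _ = (affineSpan ℝ (activeFace s r bbar)).direction ᗮ := by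
        rw [direction_affineSpan_activeFace hx, orthogonal_orthogonal]
end
end

section
/- Let X ∈ ℝ^{n×p}, y ∈ ℝ^n, λ > 0, and let pen be a real-valued polyhedral gauge on ℝ^p (pen(b) = max{⟨u_1,b⟩,…,⟨u_k,b⟩} with u_1 = 0). Then any two minimizers β̂, β̃ ∈ S_{X,λpen}(y) satisfy Xβ̂ = Xβ̃ and pen(β̂) = pen(β̃). -/
open scoped RealInnerProductSpace

noncomputable section

/-! At the midpoint of two minimizers the penalty is at most the average of the two penalties,
while by Apollonius' theorem the squared loss falls below the average of the two losses by
`‖Xβ̂ - Xβ̃‖² / 4`; minimality therefore forces `Xβ̂ = Xβ̃`. Equal objective values and equal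
losses then give equal penalties. -/

theorem ConvexOn.finset_sup' {𝕜 E β ι : Type*} [Semiring 𝕜] [PartialOrder 𝕜] [AddCommMonoid E]
    [AddCommMonoid β] [LinearOrder β] [IsOrderedAddMonoid β] [SMul 𝕜 E] [Module 𝕜 β]
    [PosSMulStrictMono 𝕜 β] {s : Set E} {t : Finset ι} (ht : t.Nonempty) {f : ι → E → β}
    (hf : ∀ i ∈ t, ConvexOn 𝕜 s (f i)) : ConvexOn 𝕜 s fun x => t.sup' ht fun i => f i x := by
  have hsup : (fun x => t.sup' ht fun i => f i x) = t.sup' ht f := by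
    ext x; rw [Finset.sup'_apply]
  rw [hsup]
  exact Finset.sup'_induction ht f (fun _ hf₁ _ hf₂ => hf₁.sup hf₂) hf

theorem ConvexOn.map_midpoint_le {E : Type*} [AddCommGroup E] [Module ℝ E] {s : Set E}
    {g : E → ℝ} (hg : ConvexOn ℝ s g) {x y : E} (hx : x ∈ s) (hy : y ∈ s) :
    g (midpoint ℝ x y) ≤ (g x + g y) / 2 := by
  have hmid : midpoint ℝ x y = (1 / 2 : ℝ) • x + (1 / 2 : ℝ) • y := by
    rw [midpoint_eq_smul_add, smul_add, invOf_eq_inv, one_div]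
  have hconv := hg.2 hx hy (by norm_num : (0 : ℝ) ≤ 1 / 2) (by norm_num : (0 : ℝ) ≤ 1 / 2)
    (by norm_num)
  rw [hmid]
  simp only [smul_eq_mul] at hconv
  linarith

theorem map_eq_and_eq_of_isMinOn_half_norm_sq_sub_add {E F : Type*} [AddCommGroup E]
    [Module ℝ E] [NormedAddCommGroup F] [InnerProductSpace ℝ F] (A : E →ₗ[ℝ] F) (y : F)
    {s : Set E} {g : E → ℝ} (hg : ConvexOn ℝ s g) {b₁ b₂ : E} (hb₁ : b₁ ∈ s) (hb₂ : b₂ ∈ s)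
    (h₁ : IsMinOn (fun b => 1 / 2 * ‖y - A b‖ ^ 2 + g b) s b₁)
    (h₂ : IsMinOn (fun b => 1 / 2 * ‖y - A b‖ ^ 2 + g b) s b₂) :
    A b₁ = A b₂ ∧ g b₁ = g b₂ := by
  rw [isMinOn_iff] at h₁ h₂
  have hJ : 1 / 2 * ‖y - A b₁‖ ^ 2 + g b₁ = 1 / 2 * ‖y - A b₂‖ ^ 2 + g b₂ :=
    le_antisymm (h₁ b₂ hb₂) (h₂ b₁ hb₁)
  have hJm := h₁ _ (hg.1.midpoint_mem hb₁ hb₂)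
  have hgm := hg.map_midpoint_le hb₁ hb₂
  have hAm : A (midpoint ℝ b₁ b₂) = midpoint ℝ (A b₁) (A b₂) := by
    simp only [midpoint_eq_smul_add, map_smul, map_add]
  have hapollonius :=
    EuclideanGeometry.dist_sq_add_dist_sq_eq_two_mul_dist_midpoint_sq_add_half_dist_sq
      y (A b₁) (A b₂)
  simp only [dist_eq_norm, ← hAm] at hapollonius
  have hfit : ‖A b₁ - A b₂‖ = 0 := by
    nlinarith [norm_nonneg (A b₁ - A b₂)]
  have hA : A b₁ = A b₂ := sub_eq_zero.mp (norm_eq_zero.mp hfit)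
  refine ⟨hA, ?_⟩
  rw [hA] at hJ
  linarith

theorem fitted_values_unique_general {n p k : ℕ}
    (X : Matrix (Fin n) (Fin p) ℝ) (y : EuclideanSpace ℝ (Fin n))
    (lam : ℝ) (hlam : 0 < lam)
    (u : Fin (k + 1) → EuclideanSpace ℝ (Fin p))
    (pen : EuclideanSpace ℝ (Fin p) → ℝ)
    (hpen : ∀ x, pen x = Finset.univ.sup' Finset.univ_nonempty fun i => ⟪u i, x⟫)
    (βh βt : EuclideanSpace ℝ (Fin p))
    (h1 : βh ∈ Smin X lam pen y) (h2 : βt ∈ Smin X lam pen y) :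
    X.mulVec βh = X.mulVec βt ∧ pen βh = pen βt := by
  have hpen_convex : ConvexOn ℝ Set.univ pen := by
    rw [funext hpen]
    exact ConvexOn.finset_sup' _ fun i _ => (innerₛₗ ℝ (u i)).convexOn convex_univ
  obtain ⟨hfit, hlam_pen⟩ :=
    map_eq_and_eq_of_isMinOn_half_norm_sq_sub_add (Matrix.toLpLin 2 2 X) y
      (hpen_convex.smul hlam.le) (Set.mem_univ βh) (Set.mem_univ βt)
      (fun b _ => h1 b) (fun b _ => h2 b)
  exact ⟨congrArg WithLp.ofLp hfit, mul_left_cancel₀ hlam.ne' hlam_pen⟩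

/-- Any two minimizers `β̂, β̃ ∈ S_{X,λpen}(y)` have the same fitted values
`Xβ̂ = Xβ̃` and the same penalty `pen(β̂) = pen(β̃)`. -/
theorem fitted_values_unique {n p k : ℕ}
    (X : Matrix (Fin n) (Fin p) ℝ) (y : EuclideanSpace ℝ (Fin n))
    (lam : ℝ) (hlam : 0 < lam)
    (u : Fin (k + 1) → EuclideanSpace ℝ (Fin p)) (hu : u 0 = 0)
    (pen : EuclideanSpace ℝ (Fin p) → ℝ)
    (hpen : ∀ x, pen x = Finset.univ.sup' Finset.univ_nonempty fun i => ⟪u i, x⟫)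
    (βh βt : EuclideanSpace ℝ (Fin p))
    (h1 : βh ∈ Smin X lam pen y) (h2 : βt ∈ Smin X lam pen y) :
    X.mulVec βh = X.mulVec βt ∧ pen βh = pen βt :=
  fitted_values_unique_general X y lam hlam u pen hpen βh βt h1 h2
end
end
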